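/- arXiv:1609.00808 — 9 statements merged into one kernel-verified Lean document; each statement's English description precedes it below -/
import Mathlib

section
/- If G is a simple graph, then its chromatic index χ'(G) is either Δ(G) or Δ(G)+1, where Δ(G) is the maximum degree of G. -/
open SimpleGraph Finset

def IsProperEdgeColoring {V : Type*} (G : SimpleGraph V) (n : ℕ) (c : Sym2 V → Fin n) : Prop :=
  ∀ e₁ ∈ G.edgeSet, ∀ e₂ ∈ G.edgeSet, e₁ ≠ e₂ → (∃ x, x ∈ e₁ ∧ x ∈ e₂) → c e₁ ≠ c e₂

noncomputable def chromIndex {V : Type*} (G : SimpleGraph V) : ℕ :=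
  sInf {n | ∃ c : Sym2 V → Fin n, IsProperEdgeColoring G n c}

def IsIndep {V : Type*} (G : SimpleGraph V) (s : Finset V) : Prop :=
  (s : Set V).Pairwise fun a b => ¬ G.Adj a b

noncomputable def indepNum {V : Type*} (G : SimpleGraph V) [Fintype V] : ℕ :=
  sSup {n | ∃ s : Finset V, IsIndep G s ∧ s.card = n}

def IsKCritical {V : Type*} (G : SimpleGraph V) [Fintype V] [DecidableEq V]
    [DecidableRel G.Adj] (k : ℕ) : Prop :=
  G.maxDegree = k ∧ chromIndex G = k + 1 ∧
    ∀ e ∈ G.edgeSet, chromIndex (G.deleteEdges {e}) = k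

def meredith {V : Type*} (G : SimpleGraph V) (v : V) (k : ℕ) (f : V → Fin k) :
    SimpleGraph ({w : V // w ≠ v} ⊕ (Fin k ⊕ Fin (k - 1))) :=
  SimpleGraph.fromRel fun x y =>
    match x, y with
    | .inl a, .inl b => G.Adj a.1 b.1
    | .inl a, .inr (.inl i) => G.Adj v a.1 ∧ f a.1 = i
    | .inr (.inl _), .inr (.inr _) => True
    | _, _ => False

noncomputable def edgesWithin {V : Type*} (G : SimpleGraph V) (Y : Finset V) : ℕ :=
  {e ∈ G.edgeSet | ∀ x ∈ e, x ∈ Y}.ncard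

namespace Viz
variable {V : Type*}

structure PC (G : SimpleGraph V) (k : ℕ) where
  c : V → V → Option (Fin (k+1))
  symm : ∀ a b, c a b = c b a
  adj : ∀ a b m, c a b = some m → G.Adj a b
  proper : ∀ a b₁ b₂ m, b₁ ≠ b₂ → c a b₁ = some m → c a b₂ ≠ some m

variable {G : SimpleGraph V} {k : ℕ}

def Free (C : PC G k) (v : V) (t : Fin (k+1)) : Prop := ∀ w, C.c v w ≠ some t

lemma PC.ne_self (C : PC G k) (v : V) : C.c v v = none := by
  cases h : C.c v v with
  | none => rfl
  | some m => exact absurd (C.adj v v m h) (G.loopless.irrefl v)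

lemma exists_free [Fintype V] [DecidableRel G.Adj] (hk : ∀ v, G.degree v ≤ k)
    (C : PC G k) (v : V) : ∃ t, Free C v t := by
  classical
  by_contra h
  push_neg at h
  choose w hw using fun t => not_forall.mp (h t)
  simp only [not_not] at hw
  have hinj : Function.Injective (fun t => (⟨w t, by
      rw [mem_neighborFinset]; exact C.adj v (w t) t (hw t)⟩ :
      G.neighborFinset v)) := by
    intro t₁ t₂ he
    have : w t₁ = w t₂ := congrArg Subtype.val he
    have h1 := hw t₁
    rw [this] at h1
    have := (hw t₂).symm.trans h1
    exact (Option.some_injective _ this).symm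
  have := Fintype.card_le_of_injective _ hinj
  simp only [Fintype.card_fin, Fintype.card_coe] at this
  have := hk v
  rw [SimpleGraph.degree] at this
  omega

section Move
variable [DecidableEq V]

lemma move (C : PC G k) {x y y' : V} {t : Fin (k+1)} (hadj : G.Adj x y)
    (hxy : C.c x y = none) (hxy' : C.c x y' = some t) (hfr : Free C y t) :
    ∃ C₁ : PC G k, C₁.c x y = some t ∧ C₁.c x y' = none ∧
      (∀ a b, ¬(a = x ∧ b = y) → ¬(b = x ∧ a = y) →
        ¬(a = x ∧ b = y') → ¬(b = x ∧ a = y') → C₁.c a b = C.c a b) := by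
  have hxny : x ≠ y := hadj.ne
  have hxny' : x ≠ y' := (C.adj x y' t hxy').ne
  have hyy' : y ≠ y' := by rintro rfl; rw [hxy] at hxy'; simp at hxy'
  set f : V → Option (Fin (k+1)) :=
    fun b => if b = y then some t else if b = y' then none else C.c x b with hf
  set c₁ : V → V → Option (Fin (k+1)) :=
    fun a b => if a = x then f b else if b = x then f a else C.c a b with hc
  have e1 : ∀ b, c₁ x b = f b := by intro b; rw [hc]; simp
  have e2 : ∀ a, c₁ a x = f a := by
    intro a
    rw [hc]
    by_cases ha : a = x
    · simp [ha]
    · simp [ha]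
  have e3 : ∀ a b, a ≠ x → b ≠ x → c₁ a b = C.c a b := by
    intro a b ha hb; rw [hc]; simp [ha, hb]
  have hfval : ∀ b m, f b = some m →
      (b = y ∧ m = t) ∨ (b ≠ y ∧ b ≠ y' ∧ C.c x b = some m) := by
    intro b m hb
    rw [hf] at hb
    by_cases h1 : b = y
    · simp only [h1, if_true] at hb
      exact Or.inl ⟨h1, (Option.some_injective _ hb.symm)⟩
    · simp only [h1, if_false] at hb
      by_cases h2 : b = y'
      · simp [h2] at hb
      · simp only [h2, if_false] at hb
        exact Or.inr ⟨h1, h2, hb⟩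
  -- properness of colors at x, as given by f
  have hfproper : ∀ b₁ b₂ m, b₁ ≠ b₂ → f b₁ = some m → f b₂ = some m → False := by
    intro b₁ b₂ m hne h1 h2
    rcases hfval b₁ m h1 with ⟨hb1y, hmt⟩ | ⟨hb1, hb1', hc1⟩
    · rcases hfval b₂ m h2 with ⟨hb2y, -⟩ | ⟨hb2, hb2', hc2⟩
      · exact hne (hb1y.trans hb2y.symm)
      · rw [hmt] at hc2; exact C.proper x b₂ y' t hb2' hc2 hxy'
    · rcases hfval b₂ m h2 with ⟨hb2y, hmt⟩ | ⟨hb2, hb2', hc2⟩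
      · rw [hmt] at hc1; exact C.proper x b₁ y' t hb1' hc1 hxy'
      · exact C.proper x b₁ b₂ m hne hc1 hc2
  have hsymm : ∀ a b, c₁ a b = c₁ b a := by
    intro a b
    by_cases ha : a = x
    · subst ha; rw [e1, e2]
    · by_cases hb : b = x
      · subst hb; rw [e1, e2]
      · rw [e3 a b ha hb, e3 b a hb ha]; exact C.symm a b
  refine ⟨⟨c₁, hsymm, ?_, ?_⟩, ?_, ?_, ?_⟩
  · -- adj
    intro a b m hab
    by_cases ha : a = x
    · rw [ha, e1] at hab
      rcases hfval b m hab with ⟨hby, -⟩ | ⟨-, -, h⟩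
      · rw [ha, hby]; exact hadj
      · rw [ha]; exact C.adj _ _ _ h
    · by_cases hb : b = x
      · rw [hb, e2] at hab
        rcases hfval a m hab with ⟨hay, -⟩ | ⟨-, -, h⟩
        · rw [hb, hay]; exact hadj.symm
        · rw [hb]; exact (C.adj _ _ _ h).symm
      · rw [e3 a b ha hb] at hab
        exact C.adj _ _ _ hab
  · -- proper
    intro a b₁ b₂ m hne h1 h2
    by_cases ha : a = x
    · rw [ha, e1] at h1 h2
      exact hfproper b₁ b₂ m hne h1 h2
    · by_cases hb1 : b₁ = x
      · rw [hb1, e2] at h1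
        have hb2 : b₂ ≠ x := fun hh => hne (hb1.trans hh.symm)
        rw [e3 a b₂ ha hb2] at h2
        rcases hfval a m h1 with ⟨hay, hmt⟩ | ⟨-, -, h⟩
        · rw [hay, hmt] at h2; exact hfr b₂ h2
        · rw [C.symm x a] at h
          exact C.proper a x b₂ m (fun hh => hne (hb1.trans hh)) h h2
      · by_cases hb2 : b₂ = x
        · rw [hb2, e2] at h2
          rw [e3 a b₁ ha hb1] at h1
          rcases hfval a m h2 with ⟨hay, hmt⟩ | ⟨-, -, h⟩
          · rw [hay, hmt] at h1; exact hfr b₁ h1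
          · rw [C.symm x a] at h
            exact C.proper a b₁ x m (fun hh => hne (hh.trans hb2.symm)) h1 h
        · rw [e3 a b₁ ha hb1] at h1
          rw [e3 a b₂ ha hb2] at h2
          exact C.proper a b₁ b₂ m hne h1 h2
  · show c₁ x y = some t
    rw [e1, hf]; simp
  · show c₁ x y' = none
    rw [e1, hf]; simp [hyy'.symm]
  · intro a b n1 n2 n3 n4
    show c₁ a b = C.c a b
    by_cases ha : a = x
    · have hb1 : b ≠ y := fun hh => n1 ⟨ha, hh⟩
      have hb2 : b ≠ y' := fun hh => n3 ⟨ha, hh⟩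
      rw [ha, e1, hf]; simp [hb1, hb2]
    · by_cases hb : b = x
      · have ha1 : a ≠ y := fun hh => n2 ⟨hb, hh⟩
        have ha2 : a ≠ y' := fun hh => n4 ⟨hb, hh⟩
        rw [hb, e2, hf]
        simp only [ha1, if_false, ha2]
        exact C.symm x a
      · exact e3 a b ha hb

end Move
section Fan
variable [DecidableEq V]

lemma colorEdge (C : PC G k) {x y : V} {γ : Fin (k+1)} (hadj : G.Adj x y)
    (hfx : Free C x γ) (hfy : Free C y γ) :
    ∃ C₁ : PC G k, C₁.c x y = some γ ∧
      (∀ a b, ¬(a = x ∧ b = y) → ¬(b = x ∧ a = y) → C₁.c a b = C.c a b) := by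
  have hxny : x ≠ y := hadj.ne
  set c₁ : V → V → Option (Fin (k+1)) :=
    fun a b => if (a = x ∧ b = y) ∨ (a = y ∧ b = x) then some γ else C.c a b with hc
  have key : ∀ a b, c₁ a b = if (a = x ∧ b = y) ∨ (a = y ∧ b = x) then some γ else C.c a b :=
    fun a b => rfl
  have huns : ∀ a b, ¬((a = x ∧ b = y) ∨ (a = y ∧ b = x)) → c₁ a b = C.c a b := by
    intro a b h; rw [key, if_neg h]
  have hval : ∀ a b m, c₁ a b = some m →
      ((a = x ∧ b = y) ∨ (a = y ∧ b = x)) ∧ m = γ ∨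
      (¬((a = x ∧ b = y) ∨ (a = y ∧ b = x)) ∧ C.c a b = some m) := by
    intro a b m h
    rw [key] at h
    by_cases hco : (a = x ∧ b = y) ∨ (a = y ∧ b = x)
    · rw [if_pos hco] at h
      exact Or.inl ⟨hco, (Option.some_injective _ h).symm⟩
    · rw [if_neg hco] at h
      exact Or.inr ⟨hco, h⟩
  refine ⟨⟨c₁, ?_, ?_, ?_⟩, ?_, ?_⟩
  · intro a b
    rw [key, key]
    by_cases hco : (a = x ∧ b = y) ∨ (a = y ∧ b = x)
    · rw [if_pos hco, if_pos (by tauto)]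
    · rw [if_neg hco, if_neg (by tauto)]
      exact C.symm a b
  · intro a b m h
    rcases hval a b m h with ⟨⟨ha, hb⟩ | ⟨ha, hb⟩, -⟩ | ⟨-, h'⟩
    · rw [ha, hb]; exact hadj
    · rw [ha, hb]; exact hadj.symm
    · exact C.adj _ _ _ h'
  · intro a b₁ b₂ m hne h1 h2
    rcases hval a b₁ m h1 with ⟨hco1, hm1⟩ | ⟨hco1, h1'⟩
    · rcases hval a b₂ m h2 with ⟨hco2, -⟩ | ⟨hco2, h2'⟩
      · -- both special edges at a : then b₁ = b₂
        apply hne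
        rcases hco1 with ⟨ha, hb⟩ | ⟨ha, hb⟩
        · rcases hco2 with ⟨ha', hb'⟩ | ⟨ha', hb'⟩
          · exact hb.trans hb'.symm
          · exact absurd (ha.symm.trans ha') hxny
        · rcases hco2 with ⟨ha', hb'⟩ | ⟨ha', hb'⟩
          · exact absurd (ha'.symm.trans ha) hxny
          · exact hb.trans hb'.symm
      · -- a on special edge, m = γ, but C.c a b₂ = some γ
        rw [hm1] at h2'
        rcases hco1 with ⟨ha, -⟩ | ⟨ha, -⟩
        · rw [ha] at h2'; exact hfx b₂ h2'
        · rw [ha] at h2'; exact hfy b₂ h2'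
    · rcases hval a b₂ m h2 with ⟨hco2, hm2⟩ | ⟨hco2, h2'⟩
      · rw [hm2] at h1'
        rcases hco2 with ⟨ha, -⟩ | ⟨ha, -⟩
        · rw [ha] at h1'; exact hfx b₁ h1'
        · rw [ha] at h1'; exact hfy b₁ h1'
      · exact C.proper a b₁ b₂ m hne h1' h2'
  · show c₁ x y = some γ
    rw [key, if_pos (Or.inl ⟨rfl, rfl⟩)]
  · intro a b n1 n2
    exact huns a b (by tauto)

def IsFan (C : PC G k) (x : V) (f : ℕ → V) (m : ℕ) : Prop :=
  (∀ i, i ≤ m → G.Adj x (f i)) ∧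
  (∀ i j, i ≤ m → j ≤ m → f i = f j → i = j) ∧
  C.c x (f 0) = none ∧
  (∀ i, i < m → ∃ t, C.c x (f (i+1)) = some t ∧ Free C (f i) t)

lemma rotate (γ : Fin (k+1)) :
    ∀ (m : ℕ) (C : PC G k) (x : V) (f : ℕ → V), IsFan C x f m →
    Free C x γ → Free C (f m) γ →
    ∃ C' : PC G k, (∀ a b, C.c a b ≠ none → C'.c a b ≠ none) ∧ C'.c x (f 0) ≠ none := by
  intro m
  induction m with
  | zero =>
    intro C x f hfan hγx hγm
    obtain ⟨C₁, hcol, huns⟩ := colorEdge C (hfan.1 0 le_rfl) hγx hγm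
    refine ⟨C₁, ?_, by rw [hcol]; simp⟩
    intro a b hab
    by_cases h1 : a = x ∧ b = f 0
    · rw [h1.1, h1.2, hcol]; simp
    · by_cases h2 : b = x ∧ a = f 0
      · rw [C₁.symm, h2.1, h2.2, hcol]; simp
      · rw [huns a b h1 h2]; exact hab
  | succ m ih =>
    intro C x f hfan hγx hγm
    obtain ⟨hadj, hinj, h0, hcond⟩ := hfan
    obtain ⟨t₀, ht₀, hfr₀⟩ := hcond 0 (Nat.succ_pos m)
    obtain ⟨C₁, hb1, hb2', hunch'⟩ := move C (hadj 0 (Nat.zero_le _)) h0 ht₀ hfr₀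
    have hb2 : C₁.c x (f 1) = none := hb2'
    have hunch : ∀ a b, ¬(a = x ∧ b = f 0) → ¬(b = x ∧ a = f 0) →
        ¬(a = x ∧ b = f 1) → ¬(b = x ∧ a = f 1) → C₁.c a b = C.c a b := hunch'
    have hxne : ∀ i, i ≤ m + 1 → f i ≠ x := fun i hi => (hadj i hi).ne'
    have hne01 : ∀ i j, i ≤ m+1 → j ≤ m+1 → i ≠ j → f i ≠ f j :=
      fun i j hi hj hne hh => hne (hinj i j hi hj hh)
    -- shifted fan for C₁
    have hfan' : IsFan C₁ x (fun i => f (i+1)) m := by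
      refine ⟨fun i hi => hadj (i+1) (by omega), fun i j hi hj hh => by
        have := hinj (i+1) (j+1) (by omega) (by omega) hh; omega, hb2, ?_⟩
      intro i hi
      obtain ⟨t, ht, hfr⟩ := hcond (i+1) (by omega)
      refine ⟨t, ?_, ?_⟩
      · show C₁.c x (f (i+1+1)) = some t
        rw [show i+1+1 = i+2 from rfl] at ht ⊢
        rw [hunch x (f (i+2))
          (fun hh => hne01 (i+2) 0 (by omega) (by omega) (by omega) hh.2)
          (fun hh => hxne (i+2) (by omega) hh.1)
          (fun hh => hne01 (i+2) 1 (by omega) (by omega) (by omega) hh.2)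
          (fun hh => hxne (i+2) (by omega) hh.1)]
        exact ht
      · show Free C₁ (f (i+1)) t
        intro w hw
        by_cases hcase : w = x ∧ f (i+1) = f 1
        · have : i = 0 := by
            have := hinj (i+1) 1 (by omega) (by omega) hcase.2; omega
          rw [C₁.symm, hcase.1, hcase.2, hb2] at hw
          simp at hw
        · rw [hunch (f (i+1)) w
            (fun hh => hxne (i+1) (by omega) hh.1)
            (fun hh => hne01 (i+1) 0 (by omega) (by omega) (by omega) hh.2)
            (fun hh => hxne (i+1) (by omega) hh.1)
            (fun hh => hcase hh)] at hw
          exact hfr w hw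
    have hγx' : Free C₁ x γ := by
      intro w hw
      by_cases h1 : w = f 0
      · rw [h1, hb1] at hw
        have : t₀ = γ := Option.some_injective _ hw
        rw [this] at ht₀
        exact hγx (f 1) ht₀
      · by_cases h2 : w = f 1
        · rw [h2, hb2] at hw; simp at hw
        · rw [hunch x w (fun hh => h1 hh.2) (fun hh => hxne 0 (by omega) hh.2.symm)
            (fun hh => h2 hh.2) (fun hh => hxne 1 (by omega) hh.2.symm)] at hw
          exact hγx w hw
    have hγm' : Free C₁ (f (m+1)) γ := by
      intro w hw
      by_cases hcase : w = x ∧ f (m+1) = f 1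
      · rw [C₁.symm, hcase.1, hcase.2, hb2] at hw
        simp at hw
      · rw [hunch (f (m+1)) w
          (fun hh => hxne (m+1) (by omega) hh.1)
          (fun hh => hne01 (m+1) 0 (by omega) (by omega) (by omega) hh.2)
          (fun hh => hxne (m+1) (by omega) hh.1)
          (fun hh => hcase hh)] at hw
        exact hγm w hw
    obtain ⟨C', hpres, hcol⟩ := ih C₁ x (fun i => f (i+1)) hfan' hγx' hγm'
    refine ⟨C', ?_, ?_⟩
    · intro a b hab
      by_cases h1 : a = x ∧ b = f 0
      · rw [h1.1, h1.2] at hab; exact absurd h0 hab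
      · by_cases h2 : b = x ∧ a = f 0
        · rw [C.symm, h2.1, h2.2] at hab; exact absurd h0 hab
        · by_cases h3 : a = x ∧ b = f 1
          · rw [h3.1, h3.2]; exact hcol
          · by_cases h4 : b = x ∧ a = f 1
            · rw [C'.symm, h4.1, h4.2]; exact hcol
            · apply hpres
              rw [hunch a b h1 (fun hh => h2 ⟨hh.1, hh.2⟩) h3 (fun hh => h4 ⟨hh.1, hh.2⟩)]
              exact hab
    · apply hpres
      rw [hb1]; simp

end Fan
section Swap
variable [DecidableEq V] [DecidableEq (Fin (k+1))]

/-- color swap -/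
def swc (α β m : Fin (k+1)) : Fin (k+1) := if m = α then β else if m = β then α else m

lemma swc_invol (α β m : Fin (k+1)) : swc α β (swc α β m) = m := by
  unfold swc
  by_cases h1 : m = α
  · by_cases h2 : β = α <;> simp [h1, h2]
  · by_cases h2 : m = β
    · simp [h1, h2]
    · simp [h1, h2]

lemma swc_alpha (α β : Fin (k+1)) : swc α β α = β := by simp [swc]

lemma swc_beta (α β : Fin (k+1)) : swc α β β = α := by
  unfold swc
  by_cases h : β = α <;> simp [h]

lemma swc_other (α β m : Fin (k+1)) (h1 : m ≠ α) (h2 : m ≠ β) : swc α β m = m := by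
  simp [swc, h1, h2]

lemma swap (C : PC G k) (α β : Fin (k+1)) (S : Set V)
    (hS : ∀ u v, u ∈ S → (C.c u v = some α ∨ C.c u v = some β) → v ∈ S) :
    ∃ C₂ : PC G k,
      (∀ a, a ∉ S → ∀ b, C₂.c a b = C.c a b) ∧
      (∀ a, a ∈ S → ∀ b, C₂.c a b = (C.c a b).map (swc α β)) := by
  classical
  set c₂ : V → V → Option (Fin (k+1)) :=
    fun a b => if a ∈ S ∨ b ∈ S then (C.c a b).map (swc α β) else C.c a b with hc
  have key : ∀ a b, c₂ a b = if a ∈ S ∨ b ∈ S then (C.c a b).map (swc α β) else C.c a b :=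
    fun a b => rfl
  have hout : ∀ a, a ∉ S → ∀ b, c₂ a b = C.c a b := by
    intro a ha b
    rw [key]
    by_cases hb : b ∈ S
    · rw [if_pos (Or.inr hb)]
      cases hcc : C.c a b with
      | none => rfl
      | some m =>
        have hm : m ≠ α ∧ m ≠ β := by
          constructor <;> intro hh <;> rw [hh] at hcc
          · exact ha (hS b a hb (Or.inl ((C.symm b a).trans hcc)))
          · exact ha (hS b a hb (Or.inr ((C.symm b a).trans hcc)))
        simp [swc_other α β m hm.1 hm.2]
    · rw [if_neg (by tauto)]
  have hin : ∀ a, a ∈ S → ∀ b, c₂ a b = (C.c a b).map (swc α β) := by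
    intro a ha b
    rw [key, if_pos (Or.inl ha)]
  have hmapinj : ∀ o₁ o₂ : Option (Fin (k+1)),
      o₁.map (swc α β) = o₂.map (swc α β) → o₁ = o₂ := by
    intro o₁ o₂ h
    have := congrArg (Option.map (swc α β)) h
    rw [Option.map_map, Option.map_map,
      show (swc α β) ∘ (swc α β) = id from funext (swc_invol α β)] at this
    simpa using this
  refine ⟨⟨c₂, ?_, ?_, ?_⟩, hout, hin⟩
  · intro a b
    rw [key, key, C.symm a b]
    by_cases h : a ∈ S ∨ b ∈ S
    · rw [if_pos h, if_pos (by tauto)]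
    · rw [if_neg h, if_neg (by tauto)]
  · intro a b m h
    rw [key] at h
    by_cases hco : a ∈ S ∨ b ∈ S
    · rw [if_pos hco] at h
      cases hcc : C.c a b with
      | none => rw [hcc] at h; simp at h
      | some m' => exact C.adj a b m' hcc
    · rw [if_neg hco] at h; exact C.adj a b m h
  · intro a b₁ b₂ m hne h1 h2
    by_cases ha : a ∈ S
    · rw [hin a ha] at h1 h2
      have := hmapinj _ _ (h1.trans h2.symm)
      cases hcc : C.c a b₁ with
      | none => rw [hcc] at h1; simp at h1
      | some m' =>
        rw [hcc] at this
        exact C.proper a b₁ b₂ m' hne hcc this.symm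
    · rw [hout a ha] at h1 h2
      exact C.proper a b₁ b₂ m hne h1 h2

end Swap
section Paths
variable [DecidableEq V]
variable {H : SimpleGraph V}

/-- Along a path ending at a "leaf" vertex `v`, with an external predecessor
`prev` of the start, every neighbor of a support vertex is in the support or
equals `prev`. (Assuming all degrees ≤ 2.) -/
lemma walkD (hdeg2 : ∀ v a b c, H.Adj v a → H.Adj v b → H.Adj v c → a = b ∨ a = c ∨ b = c)
    {v : V} (hleaf : ∀ s t, H.Adj v s → H.Adj v t → s = t) :
    ∀ {a : V} (p : H.Walk a v), p.IsPath → ∀ prev, H.Adj prev a → prev ∉ p.support →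
      ∀ s ∈ p.support, ∀ t, H.Adj s t → t ∈ p.support ∨ t = prev := by
  intro a p
  induction p with
  | nil =>
    intro hp prev hprev hnotin s hs t ht
    simp only [SimpleGraph.Walk.support_nil, List.mem_singleton] at hs
    subst hs
    exact Or.inr (hleaf t prev ht hprev.symm)
  | @cons a x v h q ih =>
    intro hp prev hprev hnotin s hs t ht
    rw [SimpleGraph.Walk.support_cons, List.mem_cons] at hs
    have hq : q.IsPath := ((SimpleGraph.Walk.cons_isPath_iff _ _).mp hp).1
    have hanotin : a ∉ q.support := ((SimpleGraph.Walk.cons_isPath_iff _ _).mp hp).2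
    rcases hs with rfl | hs
    · -- s = a
      rcases hdeg2 s t x prev ht h hprev.symm with h1 | h1 | h1
      · left
        rw [SimpleGraph.Walk.support_cons, List.mem_cons, h1]
        exact Or.inr q.start_mem_support
      · exact Or.inr h1
      · exfalso
        apply hnotin
        rw [SimpleGraph.Walk.support_cons, List.mem_cons, ← h1]
        exact Or.inr q.start_mem_support
    · rcases ih hleaf hq a h hanotin s hs t ht with h1 | h1
      · left; rw [SimpleGraph.Walk.support_cons, List.mem_cons]; exact Or.inr h1
      · left; rw [SimpleGraph.Walk.support_cons, List.mem_cons, h1]; exact Or.inl rfl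

/-- The support of a path between two leaves is closed under adjacency. -/
lemma path_closure (hdeg2 : ∀ v a b c, H.Adj v a → H.Adj v b → H.Adj v c → a = b ∨ a = c ∨ b = c)
    {u v : V} (huv : u ≠ v)
    (hlu : ∀ s t, H.Adj u s → H.Adj u t → s = t)
    (hlv : ∀ s t, H.Adj v s → H.Adj v t → s = t)
    (p : H.Walk u v) (hp : p.IsPath) :
    ∀ s ∈ p.support, ∀ t, H.Adj s t → t ∈ p.support := by
  cases p with
  | nil => exact absurd rfl huv
  | @cons u x v h q =>
    intro s hs t ht
    have hq : q.IsPath := ((SimpleGraph.Walk.cons_isPath_iff _ _).mp hp).1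
    have hunotin : u ∉ q.support := ((SimpleGraph.Walk.cons_isPath_iff _ _).mp hp).2
    rw [SimpleGraph.Walk.support_cons, List.mem_cons] at hs
    rcases hs with rfl | hs
    · have : t = x := hlu t x ht h
      rw [SimpleGraph.Walk.support_cons, List.mem_cons, this]
      exact Or.inr q.start_mem_support
    · rcases walkD hdeg2 hlv q hq u h hunotin s hs t ht with h1 | h1
      · rw [SimpleGraph.Walk.support_cons, List.mem_cons]; exact Or.inr h1
      · rw [SimpleGraph.Walk.support_cons, List.mem_cons, h1]; exact Or.inl rfl

/-- interior vertices of a path have two distinct neighbors -/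
lemma path_interior {u v : V} :
    ∀ (p : H.Walk u v), p.IsPath → ∀ w ∈ p.support, w ≠ u → w ≠ v →
      ∃ a b, a ≠ b ∧ H.Adj w a ∧ H.Adj w b := by
  intro p
  induction p with
  | nil =>
    intro hp w hw hwu hwv
    simp only [SimpleGraph.Walk.support_nil, List.mem_singleton] at hw
    exact absurd hw hwu
  | @cons u x v h q ih =>
    intro hp w hw hwu hwv
    have hq : q.IsPath := ((SimpleGraph.Walk.cons_isPath_iff _ _).mp hp).1
    have hunotin : u ∉ q.support := ((SimpleGraph.Walk.cons_isPath_iff _ _).mp hp).2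
    rw [SimpleGraph.Walk.support_cons, List.mem_cons] at hw
    rcases hw with rfl | hw
    · exact absurd rfl hwu
    · by_cases hwx : w = x
      · subst hwx
        cases q with
        | nil => exact absurd rfl hwv
        | @cons x x' v h' q' =>
          refine ⟨u, x', ?_, h.symm, h'⟩
          intro hh
          apply hunotin
          rw [hh, SimpleGraph.Walk.support_cons, List.mem_cons]
          exact Or.inr q'.start_mem_support
      · exact ih hq w hw hwx hwv

/-- a connected graph with max degree 2 cannot have three distinct leaves -/
lemma three_leaves (hdeg2 : ∀ v a b c, H.Adj v a → H.Adj v b → H.Adj v c → a = b ∨ a = c ∨ b = c)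
    {u v w : V} (huv : u ≠ v) (huw : u ≠ w) (hvw : v ≠ w)
    (hlu : ∀ s t, H.Adj u s → H.Adj u t → s = t)
    (hlv : ∀ s t, H.Adj v s → H.Adj v t → s = t)
    (hlw : ∀ s t, H.Adj w s → H.Adj w t → s = t)
    (h1 : H.Reachable u v) (h2 : H.Reachable u w) : False := by
  obtain ⟨q⟩ := h1.symm.trans h2
  set p := q.toPath.1 with hp
  have hpp : p.IsPath := q.toPath.2
  have hclo := path_closure hdeg2 hvw hlv hlw p hpp
  -- u is in the support of p
  have hmem : ∀ z, Relation.ReflTransGen H.Adj v z → z ∈ p.support := by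
    intro z hz
    induction hz with
    | refl => exact p.start_mem_support
    | tail hab hbc ihh => exact hclo _ ihh _ hbc
  have hu : u ∈ p.support := by
    apply hmem
    rw [← SimpleGraph.reachable_iff_reflTransGen]
    exact h1.symm
  obtain ⟨a, b, hab, ha, hb⟩ := path_interior p hpp u hu huv huw
  exact hab (hlu a b ha hb)

end Paths
section Extend
variable [Fintype V] [DecidableEq V] [DecidableRel G.Adj]

lemma colUnique (C : PC G k) (a s t : V) (m : Fin (k+1))
    (h1 : C.c a s = some m) (h2 : C.c a t = some m) : s = t := by
  by_contra h
  exact C.proper a s t m h h1 h2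

lemma mapswc_some (α β : Fin (k+1)) (o : Option (Fin (k+1))) (γ : Fin (k+1))
    (h : o.map (swc α β) = some γ) : o = some (swc α β γ) := by
  cases o with
  | none => simp at h
  | some m =>
    simp only [Option.map_some] at h
    have := Option.some_injective _ h
    rw [← this, swc_invol]

lemma extend (hk : ∀ v, G.degree v ≤ k) (C : PC G k) {x y₀ : V} (hadj : G.Adj x y₀)
    (hun : C.c x y₀ = none) :
    ∃ C' : PC G k, (∀ a b, C.c a b ≠ none → C'.c a b ≠ none) ∧ C'.c x y₀ ≠ none := by
  classical
  -- maximal fan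
  set FanSet : Set ℕ := {m | ∃ f, IsFan C x f m ∧ f 0 = y₀} with hFS
  have h0 : 0 ∈ FanSet := by
    refine ⟨fun _ => y₀, ⟨fun i hi => ?_, fun i j hi hj _ => by omega, hun, fun i hi => by omega⟩, rfl⟩
    exact hadj
  have hbdd : BddAbove FanSet := by
    refine ⟨Fintype.card V, fun m hm => ?_⟩
    obtain ⟨f, ⟨-, hinj, -, -⟩, -⟩ := hm
    have : (Finset.range (m+1)).card ≤ (Finset.univ : Finset V).card := by
      apply Finset.card_le_card_of_injOn f (fun _ _ => Finset.mem_univ _)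
      intro i hi j hj hij
      exact hinj i j (by simpa using Nat.lt_succ_iff.mp (Finset.mem_range.mp hi))
        (by simpa using Nat.lt_succ_iff.mp (Finset.mem_range.mp hj)) hij
    simp only [Finset.card_range, Finset.card_univ] at this
    omega
  have hMmem : sSup FanSet ∈ FanSet := Nat.sSup_mem ⟨0, h0⟩ hbdd
  set M := sSup FanSet with hM
  obtain ⟨f, hfan, hf0⟩ := hMmem
  obtain ⟨hfadj, hinj, hf0n, hcond⟩ := hfan
  have hmax : M + 1 ∉ FanSet := fun h => by
    have := le_csSup hbdd h
    omega
  -- free colors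
  obtain ⟨α, hα⟩ := exists_free hk C x
  obtain ⟨β, hβ⟩ := exists_free hk C (f M)
  by_cases hcase : ∃ γ, Free C x γ ∧ Free C (f M) γ
  · obtain ⟨γ, h1, h2⟩ := hcase
    obtain ⟨C', hpres, hcol⟩ := rotate γ M C x f ⟨hfadj, hinj, hf0n, hcond⟩ h1 h2
    exact ⟨C', hpres, by rwa [hf0] at hcol⟩
  push_neg at hcase
  -- β is used at x
  have hβx : ∃ z, C.c x z = some β := by
    by_contra h
    push_neg at h
    exact hcase β h hβ
  obtain ⟨z, hz⟩ := hβx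
  -- z is a fan vertex f (p+1)
  have hzfan : ∃ i, i ≤ M ∧ f i = z := by
    by_contra h
    push_neg at h
    apply hmax
    refine ⟨Function.update f (M+1) z, ⟨?_, ?_, ?_, ?_⟩, ?_⟩
    · intro i hi
      by_cases hiM : i = M + 1
      · rw [hiM, Function.update_self]
        exact C.adj x z β hz
      · rw [Function.update_of_ne hiM]
        exact hfadj i (by omega)
    · intro i j hi hj hij
      by_cases hiM : i = M + 1 <;> by_cases hjM : j = M + 1
      · omega
      · rw [hiM, Function.update_self, Function.update_of_ne hjM] at hij
        exact absurd hij.symm (h j (by omega))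
      · rw [hjM, Function.update_self, Function.update_of_ne hiM] at hij
        exact absurd hij (h i (by omega))
      · rw [Function.update_of_ne hiM, Function.update_of_ne hjM] at hij
        exact hinj i j (by omega) (by omega) hij
    · rw [Function.update_of_ne (by omega : (0:ℕ) ≠ M+1)]
      exact hf0n
    · intro i hi
      by_cases hiM : i = M
      · refine ⟨β, ?_, ?_⟩
        · rw [hiM, Function.update_self]
          exact hz
        · rw [Function.update_of_ne (by omega), hiM]
          exact hβ
      · obtain ⟨t, ht, hfr⟩ := hcond i (by omega)
        refine ⟨t, ?_, ?_⟩
        · rw [Function.update_of_ne (by omega)]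
          exact ht
        · rw [Function.update_of_ne (by omega)]
          exact hfr
    · rw [Function.update_of_ne (by omega : (0:ℕ) ≠ M+1)]
      exact hf0
  obtain ⟨j, hjM, hjz⟩ := hzfan
  have hj0 : j ≠ 0 := by
    intro h
    rw [h, hf0] at hjz
    rw [← hjz] at hz
    rw [hz] at hun
    simp at hun
  have hjM' : j ≠ M := by
    intro h
    rw [h] at hjz
    rw [← hjz] at hz
    exact hβ x ((C.symm (f M) x).trans hz)
  obtain ⟨p, rfl⟩ : ∃ p, j = p + 1 := ⟨j - 1, by omega⟩
  have hpM : p + 1 < M := by omega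
  have hzp : C.c x (f (p+1)) = some β := by rw [hjz]; exact hz
  -- β is free at f p
  have hβp : Free C (f p) β := by
    obtain ⟨t, ht, hfr⟩ := hcond p (by omega)
    have : t = β := Option.some_injective _ (ht.symm.trans hzp)
    rwa [this] at hfr
  -- the α/β graph
  set H : SimpleGraph V :=
    ⟨fun u v => C.c u v = some α ∨ C.c u v = some β,
     ⟨fun u v h => by
       have h' : C.c u v = some α ∨ C.c u v = some β := h
       show C.c v u = some α ∨ C.c v u = some β
       rwa [C.symm v u]⟩,
     ⟨fun v h => by
       have h' : C.c v v = some α ∨ C.c v v = some β := h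
       rw [C.ne_self] at h'
       rcases h' with h' | h' <;> simp at h'⟩⟩ with hH
  have hHadj : ∀ u v, H.Adj u v ↔ (C.c u v = some α ∨ C.c u v = some β) := fun u v => Iff.rfl
  -- leaf lemmas
  have leaf_of_nofree : ∀ v : V, Free C v β → ∀ s t, H.Adj v s → H.Adj v t → s = t := by
    intro v hfree s t hs ht
    rw [hHadj] at hs ht
    rcases hs with hs | hs
    · rcases ht with ht | ht
      · exact colUnique C v s t α hs ht
      · exact absurd ht (hfree t)
    · exact absurd hs (hfree s)
  have leaf_x : ∀ s t, H.Adj x s → H.Adj x t → s = t := by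
    intro s t hs ht
    rw [hHadj] at hs ht
    rcases hs with hs | hs
    · exact absurd hs (hα s)
    · rcases ht with ht | ht
      · exact absurd ht (hα t)
      · exact colUnique C x s t β hs ht
  have hdeg2 : ∀ v a b c, H.Adj v a → H.Adj v b → H.Adj v c → a = b ∨ a = c ∨ b = c := by
    intro v a b c ha hb hc
    rw [hHadj] at ha hb hc
    rcases ha with ha | ha <;> rcases hb with hb | hb <;> rcases hc with hc | hc
    · exact Or.inl (colUnique C v a b α ha hb)
    · exact Or.inl (colUnique C v a b α ha hb)
    · exact Or.inr (Or.inl (colUnique C v a c α ha hc))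
    · exact Or.inr (Or.inr (colUnique C v b c β hb hc))
    · exact Or.inr (Or.inr (colUnique C v b c α hb hc))
    · exact Or.inr (Or.inl (colUnique C v a c β ha hc))
    · exact Or.inl (colUnique C v a b β ha hb)
    · exact Or.inl (colUnique C v a b β ha hb)
  -- generic swap-and-rotate step
  -- `v₀` : base of the component; `L` : length of fan used.
  have main : ∀ (v₀ : V) (L : ℕ), L ≤ M → ¬ H.Reachable v₀ x → H.Reachable v₀ (f L) →
      Free C (f L) β → (∀ i, i < L → f i ∈ {u | H.Reachable v₀ u} → i ≠ p) →
      ∃ C' : PC G k, (∀ a b, C.c a b ≠ none → C'.c a b ≠ none) ∧ C'.c x y₀ ≠ none := by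
    intro v₀ L hLM hnx hvL hfLβ hip
    set S : Set V := {u | H.Reachable v₀ u} with hS
    have hclo : ∀ u v, u ∈ S → (C.c u v = some α ∨ C.c u v = some β) → v ∈ S :=
      fun u v hu hcol => hu.trans (SimpleGraph.Adj.reachable ((hHadj u v).mpr hcol))
    obtain ⟨C₂, hout, hin⟩ := swap C α β S hclo
    have hxS : x ∉ S := fun hh => hnx hh
    have hnonepres : ∀ a b, C.c a b ≠ none → C₂.c a b ≠ none := by
      intro a b hab
      by_cases ha : a ∈ S
      · rw [hin a ha]
        cases hcc : C.c a b with
        | none => exact absurd hcc hab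
        | some m => simp
      · rw [hout a ha]; exact hab
    have hfreex : Free C₂ x α := by
      intro w hw
      rw [hout x hxS] at hw
      exact hα w hw
    have hfreeL : Free C₂ (f L) α := by
      intro w hw
      rw [hin (f L) hvL] at hw
      have := mapswc_some α β _ _ hw
      rw [swc_alpha] at this
      exact hfLβ w this
    have hfan2 : IsFan C₂ x f L := by
      refine ⟨fun i hi => hfadj i (by omega), fun i j hi hj hij => hinj i j (by omega) (by omega) hij, ?_, ?_⟩
      · rw [hout x hxS]; exact hf0n
    
      · intro i hi
        obtain ⟨t, ht, hfr⟩ := hcond i (by omega)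
        refine ⟨t, ?_, ?_⟩
        · rw [hout x hxS]; exact ht
        · intro w hw
          by_cases hfi : f i ∈ S
          · rw [hin (f i) hfi] at hw
            have hsome := mapswc_some α β _ _ hw
            have htα : t ≠ α := by
              intro hh; rw [hh] at ht; exact hα (f (i+1)) ht
            have htβ : t ≠ β := by
              intro hh
              rw [hh] at ht
              have := colUnique C x (f (i+1)) (f (p+1)) β ht hzp
              have := hinj (i+1) (p+1) (by omega) (by omega) this
              exact (hip i hi hfi) (by omega)
            rw [swc_other α β t htα htβ] at hsome
            exact hfr w hsome
          · rw [hout (f i) hfi] at hw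
            exact hfr w hw
    obtain ⟨C', hpres, hcol⟩ := rotate α L C₂ x f hfan2 hfreex hfreeL
    refine ⟨C', fun a b hab => hpres a b (hnonepres a b hab), by rwa [hf0] at hcol⟩
  -- case analysis
  by_cases hp_x : H.Reachable (f p) x
  · by_cases hM_x : H.Reachable (f M) x
    · -- three leaves: contradiction
      exfalso
      have hxfM : x ≠ f M := (hfadj M le_rfl).ne
      have hxfp : x ≠ f p := (hfadj p (by omega)).ne
      have hfMfp : f M ≠ f p := by
        intro hh
        have := hinj M p le_rfl (by omega) hh
        omega
      exact three_leaves hdeg2 hxfM hxfp hfMfp leaf_x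
        (leaf_of_nofree (f M) hβ) (leaf_of_nofree (f p) hβp)
        hM_x.symm hp_x.symm
    · -- swap component of f M, full fan
      apply main (f M) M le_rfl hM_x (SimpleGraph.Reachable.refl _) hβ
      intro i hi hfi hip
      -- f p ∈ comp (f M) would give Reachable (f M) x
      apply hM_x
      rw [hip] at hfi
      exact SimpleGraph.Reachable.trans hfi hp_x
  · -- swap component of f p, prefix fan of length p
    apply main (f p) p (by omega) hp_x (SimpleGraph.Reachable.refl _) hβp
    intro i hi _ 
    omega

end Extend
section Total
variable [Fintype V] [DecidableEq V] [DecidableRel G.Adj]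

noncomputable def uncN (C : PC G k) : ℕ :=
  (Finset.univ.filter (fun pr : V × V =>
    G.Adj pr.1 pr.2 ∧ C.c pr.1 pr.2 = none)).card

lemma total (hk : ∀ v, G.degree v ≤ k) :
    ∃ C : PC G k, ∀ a b, G.Adj a b → C.c a b ≠ none := by
  classical
  have key : ∀ n, ∀ C : PC G k, uncN C ≤ n →
      ∃ C' : PC G k, ∀ a b, G.Adj a b → C'.c a b ≠ none := by
    intro n
    induction n with
    | zero =>
      intro C hC
      refine ⟨C, fun a b hab hnone => ?_⟩
      have : (a, b) ∈ Finset.univ.filter (fun pr : V × V =>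
          G.Adj pr.1 pr.2 ∧ C.c pr.1 pr.2 = none) := by
        simp [hab, hnone]
      have := Finset.card_pos.mpr ⟨_, this⟩
      unfold uncN at hC
      omega
    | succ n ih =>
      intro C hC
      by_cases h : ∃ a b, G.Adj a b ∧ C.c a b = none
      · obtain ⟨a, b, hab, hnone⟩ := h
        obtain ⟨C', hpres, hcol⟩ := extend hk C hab hnone
        apply ih C'
        have hsub : (Finset.univ.filter (fun pr : V × V =>
            G.Adj pr.1 pr.2 ∧ C'.c pr.1 pr.2 = none)) ⊂
            (Finset.univ.filter (fun pr : V × V =>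
            G.Adj pr.1 pr.2 ∧ C.c pr.1 pr.2 = none)) := by
          rw [Finset.ssubset_iff_of_subset]
          · refine ⟨(a, b), by simp [hab, hnone], ?_⟩
            simp only [Finset.mem_filter, Finset.mem_univ, true_and]
            exact fun hh => hcol hh.2
          · intro pr hpr
            simp only [Finset.mem_filter, Finset.mem_univ, true_and] at hpr ⊢
            refine ⟨hpr.1, ?_⟩
            by_contra hne
            exact hpres pr.1 pr.2 hne hpr.2
        have := Finset.card_lt_card hsub
        unfold uncN at hC ⊢
        omega
      · push_neg at h
        exact ⟨C, fun a b hab => h a b hab⟩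
  let C0 : PC G k := ⟨fun _ _ => none, fun _ _ => rfl,
    fun a b m h => by simp at h, fun a b₁ b₂ m hne h => by simp at h⟩
  exact key (uncN C0) C0 le_rfl
  
end Total
end Viz

/-- Vizing's theorem. -/
theorem stmt0 {V : Type*} [Fintype V] (G : SimpleGraph V) [DecidableRel G.Adj] :
    chromIndex G = G.maxDegree ∨ chromIndex G = G.maxDegree + 1 := by
  classical
  set Δ := G.maxDegree with hΔ
  obtain ⟨C, hC⟩ := Viz.total (G := G) (k := Δ) (fun v => G.degree_le_maxDegree v)
  set cstar : Sym2 V → Fin (Δ+1) :=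
    Sym2.lift ⟨fun a b => (C.c a b).getD 0, fun a b => by
      show (C.c a b).getD 0 = (C.c b a).getD 0
      rw [C.symm]⟩ with hcs
  have hproper : IsProperEdgeColoring G (Δ+1) cstar := by
    rintro e₁ he₁ e₂ he₂ hne ⟨x, hx1, hx2⟩
    obtain ⟨y₁, rfl⟩ := Sym2.mem_iff_exists.mp hx1
    obtain ⟨y₂, rfl⟩ := Sym2.mem_iff_exists.mp hx2
    have h1 : G.Adj x y₁ := (SimpleGraph.mem_edgeSet G).mp he₁
    have h2 : G.Adj x y₂ := (SimpleGraph.mem_edgeSet G).mp he₂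
    have hy : y₁ ≠ y₂ := fun hh => hne (by rw [hh])
    obtain ⟨m₁, hm₁⟩ := Option.ne_none_iff_exists'.mp (hC x y₁ h1)
    obtain ⟨m₂, hm₂⟩ := Option.ne_none_iff_exists'.mp (hC x y₂ h2)
    rw [hcs, Sym2.lift_mk, Sym2.lift_mk]
    simp only [hm₁, hm₂, Option.getD_some]
    intro hh
    rw [hh] at hm₁
    exact C.proper x y₂ y₁ m₂ hy.symm hm₂ hm₁
  have hmem : (Δ+1) ∈ {n | ∃ c : Sym2 V → Fin n, IsProperEdgeColoring G n c} := by
    rw [Set.mem_setOf_eq]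
    exact ⟨cstar, hproper⟩
  have hub : chromIndex G ≤ Δ + 1 := by
    unfold chromIndex
    exact Nat.sInf_le hmem
  have hlb : Δ ≤ chromIndex G := by
    unfold chromIndex
    apply le_csInf ⟨Δ+1, hmem⟩
    rintro n ⟨c, hc⟩
    apply G.maxDegree_le_of_forall_degree_le
    intro v
    have hcard : (G.neighborFinset v).card ≤ (Finset.univ : Finset (Fin n)).card := by
      apply Finset.card_le_card_of_injOn (fun w => c s(v, w)) (fun _ _ => Finset.mem_univ _)
      intro w₁ hw₁ w₂ hw₂ hcc
      by_contra hne
      have ha₁ : G.Adj v w₁ := (SimpleGraph.mem_neighborFinset _ _ _).mp hw₁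
      have ha₂ : G.Adj v w₂ := (SimpleGraph.mem_neighborFinset _ _ _).mp hw₂
      have he : s(v, w₁) ≠ s(v, w₂) := by
        intro hh
        rcases Sym2.eq_iff.mp hh with ⟨-, h⟩ | ⟨h', h⟩
        · exact hne h
        · exact hne ((h.trans h').symm ▸ rfl)
      exact hc s(v, w₁) ((SimpleGraph.mem_edgeSet G).mpr ha₁)
        s(v, w₂) ((SimpleGraph.mem_edgeSet G).mpr ha₂) he
        ⟨v, Sym2.mem_mk_left _ _, Sym2.mem_mk_left _ _⟩ hcc
    rw [← SimpleGraph.card_neighborFinset_eq_degree]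
    simpa using hcard
  omega
end

section
/- Let G be a critical graph and xy an edge of G. Then at least Δ(G) − d_G(y) + 1 vertices in N_G(x) \ {y} have degree Δ(G) (Vizing's Adjacency Lemma). -/
open SimpleGraph Finset

set_option linter.unusedSectionVars false
set_option maxHeartbeats 1000000

namespace VAL
variable {V : Type*} [Fintype V] [DecidableEq V]

def PE (G : SimpleGraph V) {k : ℕ} (x u : V) (c : Sym2 V → Fin k) : Prop :=
  ∀ ⦃v a b : V⦄, G.Adj v a → G.Adj v b → a ≠ b → s(v,a) ≠ s(x,u) → s(v,b) ≠ s(x,u) →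
    c s(v,a) ≠ c s(v,b)

def ProperG (G : SimpleGraph V) {k : ℕ} (c : Sym2 V → Fin k) : Prop :=
  ∀ ⦃v a b : V⦄, G.Adj v a → G.Adj v b → a ≠ b → c s(v,a) ≠ c s(v,b)

def missP (G : SimpleGraph V) [DecidableRel G.Adj] {k : ℕ} (x u v : V)
    (c : Sym2 V → Fin k) : Finset (Fin k) :=
  Finset.univ \ (((G.neighborFinset v).filter (fun w => s(v,w) ≠ s(x,u))).image
    (fun w => c s(v,w)))

lemma sxne {x a b : V} (h : a ≠ b) : s(x,a) ≠ s(x,b) :=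
  fun he => h (Sym2.congr_right.mp he)

lemma ne_hole {v w x u : V} (h1 : v ≠ x) (h2 : v ≠ u) : s(v,w) ≠ s(x,u) := by
  intro he
  rw [Sym2.eq_iff] at he
  rcases he with ⟨ha, _⟩ | ⟨ha, _⟩
  · exact h1 ha
  · exact h2 ha

variable {G : SimpleGraph V} [DecidableRel G.Adj] {k : ℕ} {x : V}

lemma mem_missP {u v : V} {c : Sym2 V → Fin k} {γ : Fin k} :
    γ ∈ missP G x u v c ↔ ∀ w, G.Adj v w → s(v,w) ≠ s(x,u) → c s(v,w) ≠ γ := by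
  simp only [missP, Finset.mem_sdiff, Finset.mem_univ, true_and, Finset.mem_image,
    Finset.mem_filter, SimpleGraph.mem_neighborFinset]
  push_neg
  constructor
  · intro h w hw hne; exact h w ⟨hw, hne⟩
  · intro h w hw; exact h w hw.1 hw.2

lemma missP_subset_self {u v : V} (hvx : v ≠ x) {c : Sym2 V → Fin k} :
    missP G x u v c ⊆ missP G x v v c := by
  intro γ hγ
  rw [mem_missP] at hγ ⊢
  intro w hw hne
  rcases eq_or_ne (s(v,w)) (s(x,u)) with he | he
  · exfalso
    rw [Sym2.eq_iff] at he
    rcases he with ⟨h1, h2⟩ | ⟨h1, h2⟩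
    · exact hvx h1
    · apply hne; rw [h2, h1]; exact Sym2.eq_swap
  · exact hγ w hw he

lemma fill_proper {u : V} {c : Sym2 V → Fin k} {γ : Fin k} (hPE : PE G x u c)
    (hxu : G.Adj x u)
    (hγx : γ ∈ missP G x u x c) (hγu : γ ∈ missP G x u u c) :
    ProperG G (Function.update c s(x,u) γ) := by
  have key : ∀ ⦃v a b : V⦄, G.Adj v a → G.Adj v b → a ≠ b → s(v,a) = s(x,u) →
      s(v,b) ≠ s(x,u) →
      Function.update c s(x,u) γ s(v,a) ≠ Function.update c s(x,u) γ s(v,b) := by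
    intro v a b hva hvb hab h1 h2
    rw [h1, Function.update_self, Function.update_of_ne h2]
    rw [Sym2.eq_iff] at h1
    rcases h1 with ⟨hv, ha⟩ | ⟨hv, ha⟩
    · -- v = x, a = u
      have e1 : s(v,b) = s(x,b) := by rw [hv]
      rw [e1] at h2 ⊢
      have hxb : G.Adj x b := hv ▸ hvb
      exact fun h => (mem_missP.mp hγx) b hxb h2 h.symm
    · -- v = u, a = x
      have e1 : s(v,b) = s(u,b) := by rw [hv]
      rw [e1] at h2 ⊢
      have hub : G.Adj u b := hv ▸ hvb
      have hbx : b ≠ x := fun h => hab (by rw [h, ha])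
      have hne' : s(u,b) ≠ s(x,u) := by
        intro he
        rw [Sym2.eq_iff] at he
        rcases he with ⟨h3, _⟩ | ⟨_, h4⟩
        · exact hxu.ne' h3
        · exact hbx h4
      exact fun h => (mem_missP.mp hγu) b hub hne' h.symm
  intro v a b hva hvb hab
  rcases eq_or_ne (s(v,a)) (s(x,u)) with h1 | h1
  · rcases eq_or_ne (s(v,b)) (s(x,u)) with h2 | h2
    · exact absurd (Sym2.congr_right.mp (h1.trans h2.symm)) hab
    · exact key hva hvb hab h1 h2
  · rcases eq_or_ne (s(v,b)) (s(x,u)) with h2 | h2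
    · exact fun h => key hvb hva hab.symm h2 h1 h.symm
    · rw [Function.update_of_ne h1, Function.update_of_ne h2]
      exact hPE hva hvb hab h1 h2

lemma step_PE {u a : V} {c : Sym2 V → Fin k} (hPE : PE G x u c) (hxu : G.Adj x u)
    (hxa : G.Adj x a) (hau : a ≠ u) (hmiss : c s(x,a) ∈ missP G x u u c) :
    PE G x a (Function.update c s(x,u) (c s(x,a))) := by
  have key : ∀ ⦃v p q : V⦄, G.Adj v p → G.Adj v q → p ≠ q → s(v,p) ≠ s(x,a) →
      s(v,q) ≠ s(x,a) → s(v,p) = s(x,u) → s(v,q) ≠ s(x,u) →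
      Function.update c s(x,u) (c s(x,a)) s(v,p) ≠
      Function.update c s(x,u) (c s(x,a)) s(v,q) := by
    intro v p q hvp hvq hpq hpa hqa h1 h2
    rw [h1, Function.update_self, Function.update_of_ne h2]
    rw [Sym2.eq_iff] at h1
    rcases h1 with ⟨hv, hp⟩ | ⟨hv, hp⟩
    · -- v = x, p = u
      have e1 : s(v,q) = s(x,q) := by rw [hv]
      rw [e1] at h2 hqa ⊢
      have hxq : G.Adj x q := hv ▸ hvq
      have haq : a ≠ q := fun h => hqa (by rw [h])
      exact hPE hxa hxq haq (sxne hau) h2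
    · -- v = u, p = x
      have e1 : s(v,q) = s(u,q) := by rw [hv]
      rw [e1] at h2 hqa ⊢
      have huq : G.Adj u q := hv ▸ hvq
      have hqx : q ≠ x := fun h => hpq (by rw [hp, h])
      have hne' : s(u,q) ≠ s(x,u) := by
        intro he
        rw [Sym2.eq_iff] at he
        rcases he with ⟨h3, _⟩ | ⟨_, h4⟩
        · exact hxu.ne' h3
        · exact hqx h4
      exact fun h => (mem_missP.mp hmiss) q huq hne' h.symm
  intro v p q hvp hvq hpq hpa hqa
  rcases eq_or_ne (s(v,p)) (s(x,u)) with h1 | h1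
  · rcases eq_or_ne (s(v,q)) (s(x,u)) with h2 | h2
    · exact absurd (Sym2.congr_right.mp (h1.trans h2.symm)) hpq
    · exact key hvp hvq hpq hpa hqa h1 h2
  · rcases eq_or_ne (s(v,q)) (s(x,u)) with h2 | h2
    · exact fun h => key hvq hvp hpq.symm hqa hpa h2 h1 h.symm
    · rw [Function.update_of_ne h1, Function.update_of_ne h2]
      exact hPE hvp hvq hpq h1 h2

lemma missP_update_ne {u h' v : V} {c : Sym2 V → Fin k} {δ : Fin k} (hvx : v ≠ x)
    (hvu : v ≠ u) : missP G x h' v (Function.update c s(x,u) δ) = missP G x h' v c := by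
  have hval : ∀ w, Function.update c s(x,u) δ s(v,w) = c s(v,w) := by
    intro w
    exact Function.update_of_ne (ne_hole hvx hvu) _ _
  ext γ
  rw [mem_missP, mem_missP]
  constructor
  · intro h w hw hne; rw [← hval w]; exact h w hw hne
  · intro h w hw hne; rw [hval w]; exact h w hw hne

lemma missx_step {u a : V} {c : Sym2 V → Fin k} {γ : Fin k} (hxa : G.Adj x a)
    (hau : a ≠ u) (hγx : γ ∈ missP G x u x c) :
    γ ∈ missP G x a x (Function.update c s(x,u) (c s(x,a))) := by
  rw [mem_missP] at hγx ⊢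
  intro w hw hne
  rcases eq_or_ne w u with hwu | hwu
  · subst hwu
    rw [Function.update_self]
    exact hγx a hxa (sxne hau)
  · rw [Function.update_of_ne (sxne hwu)]
    exact hγx w hw (sxne hwu)

lemma miss_last_step {u a g : V} {c : Sym2 V → Fin k} {γ δ : Fin k} (hgx : g ≠ x)
    (hgu : g ≠ u) (hγg : γ ∈ missP G x u g c) :
    γ ∈ missP G x a g (Function.update c s(x,u) δ) := by
  rw [mem_missP] at hγg ⊢
  intro w hw _
  rw [Function.update_of_ne (ne_hole hgx hgu)]
  exact hγg w hw (ne_hole hgx hgu)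

def LFr (G : SimpleGraph V) [DecidableRel G.Adj] {k : ℕ} (x : V)
    (c : Sym2 V → Fin k) : List V → Prop
  | [] => True
  | [_] => True
  | (u :: a :: L) => c s(x,a) ∈ missP G x u u c ∧ LFr G x c (a :: L)

lemma LFr_update {u : V} {c : Sym2 V → Fin k} {δ : Fin k} :
    ∀ (M : List V), LFr G x c M → x ∉ M → u ∉ M →
      LFr G x (Function.update c s(x,u) δ) M
  | [] => fun _ _ _ => trivial
  | [_] => fun _ _ _ => trivial
  | (v :: a :: L) => by
    intro hLF hx hu
    obtain ⟨h1, h2⟩ := hLF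
    have hax : a ≠ x := fun h => hx (h ▸ List.mem_cons_of_mem _ (List.mem_cons_self))
    have hau : a ≠ u := fun h => hu (h ▸ List.mem_cons_of_mem _ (List.mem_cons_self))
    have hvx : v ≠ x := fun h => hx (h ▸ List.mem_cons_self)
    have hvu : v ≠ u := fun h => hu (h ▸ List.mem_cons_self)
    constructor
    · rw [Function.update_of_ne (sxne hau),
        missP_update_ne hvx hvu]
      exact h1
    · exact LFr_update (a :: L) h2 (fun h => hx (List.mem_cons_of_mem _ h))
        (fun h => hu (List.mem_cons_of_mem _ h))

theorem lf_contra {γ : Fin k} :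
    ∀ (M : List V) (u : V) (c : Sym2 V → Fin k), LFr G x c (u :: M) →
    (u :: M).Nodup → (∀ v ∈ u :: M, G.Adj x v) → PE G x u c →
    γ ∈ missP G x u x c →
    γ ∈ missP G x u ((u :: M).getLast (by simp)) c →
    ∃ c' : Sym2 V → Fin k, ProperG G c'
  | [], u, c => by
    intro _ _ hadj hPE hγx hγg
    refine ⟨Function.update c s(x,u) γ, ?_⟩
    apply fill_proper hPE (hadj u (List.mem_cons_self)) hγx
    simpa using hγg
  | (a :: M'), u, c => by
    intro hLF hnd hadj hPE hγx hγg
    obtain ⟨h1, h2⟩ := hLF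
    have hxu : G.Adj x u := hadj u (List.mem_cons_self)
    have hxa : G.Adj x a := hadj a (List.mem_cons_of_mem _ (List.mem_cons_self))
    have hunotin : u ∉ a :: M' := (List.nodup_cons.mp hnd).1
    have hau : a ≠ u := fun h => hunotin (h ▸ List.mem_cons_self)
    have hxnotin : x ∉ a :: M' := by
      intro hx
      exact G.irrefl (hadj x (List.mem_cons_of_mem _ hx))
    set c₂ := Function.update c s(x,u) (c s(x,a)) with hc₂
    have hPE₂ : PE G x a c₂ := step_PE hPE hxu hxa hau h1
    have hLF₂ : LFr G x c₂ (a :: M') := LFr_update _ h2 hxnotin hunotin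
    have hnd₂ : (a :: M').Nodup := (List.nodup_cons.mp hnd).2
    have hadj₂ : ∀ v ∈ a :: M', G.Adj x v := fun v hv =>
      hadj v (List.mem_cons_of_mem _ hv)
    have hγx₂ : γ ∈ missP G x a x c₂ := missx_step hxa hau hγx
    have hg : (u :: a :: M').getLast (by simp) = (a :: M').getLast (by simp) :=
      List.getLast_cons (by simp)
    set g := (a :: M').getLast (by simp) with hgdef
    have hgmem : g ∈ a :: M' := List.getLast_mem _
    have hγg₂ : γ ∈ missP G x a g c₂ := by
      apply miss_last_step
      · exact fun h => hxnotin (h ▸ hgmem)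
      · exact fun h => hunotin (h ▸ hgmem)
      · rw [hg] at hγg; exact hγg
    exact lf_contra M' a c₂ hLF₂ hnd₂ hadj₂ hPE₂ hγx₂ hγg₂
inductive MF (G : SimpleGraph V) [DecidableRel G.Adj] {k : ℕ} (x y : V)
    (c : Sym2 V → Fin k) : List V → Prop
  | base : MF G x y c [y]
  | cons {L : List V} {w : V} : MF G x y c L → G.Adj x w → w ∉ L → w ≠ y →
      (∃ v ∈ L, c s(x,w) ∈ missP G x y v c) → MF G x y c (w :: L)

variable {y : V}

lemma mf_mem_adj (hxy : G.Adj x y) {c : Sym2 V → Fin k} {L : List V}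
    (hMF : MF G x y c L) : ∀ v ∈ L, G.Adj x v := by
  induction hMF with
  | base => intro v hv; rw [List.mem_singleton] at hv; exact hv ▸ hxy
  | cons hMF hadj hnotin hne hjust ih =>
    intro v hv
    rcases List.mem_cons.mp hv with h | h
    · exact h ▸ hadj
    · exact ih v h

lemma mf_nodup {c : Sym2 V → Fin k} {L : List V} (hMF : MF G x y c L) : L.Nodup := by
  induction hMF with
  | base => simp
  | cons hMF hadj hnotin hne hjust ih => exact List.nodup_cons.mpr ⟨hnotin, ih⟩

lemma mf_of_cons {c : Sym2 V → Fin k} {w : V} {L : List V}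
    (h : MF G x y c (w :: L)) (hL : L ≠ []) : MF G x y c L := by
  cases h with
  | base => exact absurd rfl hL
  | cons h2 _ _ _ => exact h2

lemma mf_suffix {c : Sym2 V → Fin k} :
    ∀ (A M : List V), MF G x y c (A ++ M) → M ≠ [] → MF G x y c M
  | [], M => fun h _ => h
  | (a :: A'), M => fun h hM =>
    mf_suffix A' M (mf_of_cons h (fun he => hM (List.append_eq_nil_iff.mp he).2)) hM

lemma LFr_append {c : Sym2 V → Fin k} :
    ∀ (N : List V) (g w : V), LFr G x c N → N.getLast? = some g →
      c s(x,w) ∈ missP G x g g c → LFr G x c (N ++ [w])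
  | [], g, w => by intro _ h _; simp at h
  | [v], g, w => by
    intro _ h hm
    simp only [List.getLast?_singleton, Option.some.injEq] at h
    exact ⟨h ▸ hm, trivial⟩
  | (v :: a :: L), g, w => by
    intro hLF hlast hm
    obtain ⟨h1, h2⟩ := hLF
    exact ⟨h1, LFr_append (a :: L) g w h2 (by simpa using hlast) hm⟩

lemma mf_extract (hxy : G.Adj x y) {c : Sym2 V → Fin k} {L : List V}
    (hMF : MF G x y c L) : ∀ u ∈ L, ∃ N : List V, LFr G x c N ∧ N ≠ [] ∧ N.Nodup ∧
      (∀ v ∈ N, v ∈ L) ∧ N.head? = some y ∧ N.getLast? = some u := by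
  induction hMF with
  | base =>
    intro u hu
    rw [List.mem_singleton] at hu
    exact ⟨[y], trivial, by simp, by simp, by simp, by simp, by simp [hu]⟩
  | @cons L' w hMF hadj hnotin hne hjust ih =>
    intro u hu
    rcases List.mem_cons.mp hu with h | h
    · subst h
      obtain ⟨v, hvL, hj⟩ := hjust
      obtain ⟨N', hLF', hne', hnd', hsub', hhead', hlast'⟩ := ih v hvL
      have hvx : v ≠ x := (mf_mem_adj hxy hMF v hvL).ne'
      refine ⟨N' ++ [u], ?_, by simp, ?_, ?_, ?_, ?_⟩
      · exact LFr_append N' v u hLF' hlast' (missP_subset_self hvx hj)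
      · rw [List.nodup_append]
        refine ⟨hnd', by simp, ?_⟩
        intro a ha b hb hab
        rw [List.mem_singleton] at hb
        rw [hab, hb] at ha
        exact hnotin (hsub' u ha)
      · intro v' hv'
        rcases List.mem_append.mp hv' with h' | h'
        · exact List.mem_cons_of_mem _ (hsub' v' h')
        · rw [List.mem_singleton] at h'; exact h' ▸ List.mem_cons_self
      · rw [List.head?_append_of_ne_nil] at *
        · exact hhead'
        · exact hne'
      · simp [List.getLast?_concat]
    · obtain ⟨N', hLF', hne', hnd', hsub', hhead', hlast'⟩ := ih u h
      exact ⟨N', hLF', hne', hnd', fun v hv => List.mem_cons_of_mem _ (hsub' v hv),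
        hhead', hlast'⟩

/-- Claim A: a color missing at x cannot be missing at any multifan vertex -/
lemma mfA (hnK : ∀ c' : Sym2 V → Fin k, ¬ ProperG G c') (hxy : G.Adj x y)
    {c : Sym2 V → Fin k} {L : List V} (hMF : MF G x y c L) (hPE : PE G x y c)
    {u : V} (hu : u ∈ L) {γ : Fin k} (hγx : γ ∈ missP G x y x c)
    (hγu : γ ∈ missP G x y u c) : False := by
  obtain ⟨N, hLF, hne, hnd, hsub, hhead, hlast⟩ := mf_extract hxy hMF u hu
  obtain ⟨h, N', rfl⟩ : ∃ (h : V) (N' : List V), N = h :: N' := by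
    cases N with
    | nil => exact absurd rfl hne
    | cons h N' => exact ⟨h, N', rfl⟩
  have hy : h = y := by simpa using hhead
  subst hy
  have hgl : (h :: N').getLast (by simp) = u := by
    rw [List.getLast?_eq_getLast (l := h :: N') (by simp)] at hlast
    exact Option.some_injective _ hlast
  obtain ⟨c', hc'⟩ := lf_contra (γ := γ) N' h c hLF hnd
    (fun v hv => mf_mem_adj hxy hMF v (hsub v hv)) hPE hγx (by rw [hgl]; exact hγu)
  exact hnK c' hc'
def KG (G : SimpleGraph V) [DecidableRel G.Adj] {k : ℕ} (x y : V) (c : Sym2 V → Fin k)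
    (α β : Fin k) : SimpleGraph V where
  Adj u v := G.Adj u v ∧ s(u,v) ≠ s(x,y) ∧ (c s(u,v) = α ∨ c s(u,v) = β)
  symm := by
    constructor
    intro u v ⟨h1, h2, h3⟩
    have e : s(v,u) = s(u,v) := Sym2.eq_swap
    exact ⟨h1.symm, by rw [e]; exact h2, by rw [e]; exact h3⟩
  loopless := ⟨fun v h => G.irrefl h.1⟩

lemma KG_adj {c : Sym2 V → Fin k} {α β : Fin k} {u v : V} :
    (KG G x y c α β).Adj u v ↔
      G.Adj u v ∧ s(u,v) ≠ s(x,y) ∧ (c s(u,v) = α ∨ c s(u,v) = β) := Iff.rfl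

noncomputable def sw (G : SimpleGraph V) [DecidableRel G.Adj] {k : ℕ} (x y : V)
    (c : Sym2 V → Fin k) (α β : Fin k) (v0 : V) : Sym2 V → Fin k := fun e =>
  letI := Classical.dec (∃ w, w ∈ e ∧ (KG G x y c α β).Reachable v0 w)
  if (∃ w, w ∈ e ∧ (KG G x y c α β).Reachable v0 w) then Equiv.swap α β (c e) else c e

variable {c : Sym2 V → Fin k} {α β : Fin k} {v0 : V}

lemma sw_touch {v : V} (h : (KG G x y c α β).Reachable v0 v) (w : V) :
    sw G x y c α β v0 s(v,w) = Equiv.swap α β (c s(v,w)) := by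
  unfold sw
  exact if_pos ⟨v, Sym2.mem_mk_left v w, h⟩

lemma sw_fix {e : Sym2 V} (h1 : c e ≠ α) (h2 : c e ≠ β) : sw G x y c α β v0 e = c e := by
  unfold sw
  split
  · exact Equiv.swap_apply_of_ne_of_ne h1 h2
  · rfl

lemma sw_edge_of_not_reach {v w : V} (hadj : G.Adj v w) (hhole : s(v,w) ≠ s(x,y))
    (hv : ¬ (KG G x y c α β).Reachable v0 v) : sw G x y c α β v0 s(v,w) = c s(v,w) := by
  by_cases h1 : c s(v,w) = α ∨ c s(v,w) = β
  · have hK : (KG G x y c α β).Adj v w := ⟨hadj, hhole, h1⟩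
    unfold sw
    apply if_neg
    rintro ⟨u, hu, hr⟩
    rcases Sym2.mem_iff.mp hu with rfl | rfl
    · exact hv hr
    · exact hv (hr.trans hK.symm.reachable)
  · push_neg at h1
    exact sw_fix h1.1 h1.2

lemma missP_sw_not_reach {v : V} (hv : ¬ (KG G x y c α β).Reachable v0 v) :
    missP G x y v (sw G x y c α β v0) = missP G x y v c := by
  ext γ
  rw [mem_missP, mem_missP]
  constructor
  · intro h w hw hne; rw [← sw_edge_of_not_reach hw hne hv]; exact h w hw hne
  · intro h w hw hne; rw [sw_edge_of_not_reach hw hne hv]; exact h w hw hne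

lemma image_swap_sdiff (σ : Equiv.Perm (Fin k)) (T : Finset (Fin k)) :
    (Finset.univ \ T).image σ = Finset.univ \ T.image σ := by
  ext γ
  simp only [Finset.mem_image, Finset.mem_sdiff, Finset.mem_univ, true_and]
  constructor
  · rintro ⟨δ, hδ, rfl⟩ ⟨δ', hδ', he⟩
    exact hδ (σ.injective he ▸ hδ')
  · intro h
    exact ⟨σ.symm γ, fun hc => h ⟨σ.symm γ, hc, by simp⟩, by simp⟩

lemma missP_sw_reach {v : V} (hv : (KG G x y c α β).Reachable v0 v) :
    missP G x y v (sw G x y c α β v0) = (missP G x y v c).image (Equiv.swap α β) := by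
  unfold missP
  have : ((G.neighborFinset v).filter (fun w => s(v,w) ≠ s(x,y))).image
      (fun w => sw G x y c α β v0 s(v,w)) =
      (((G.neighborFinset v).filter (fun w => s(v,w) ≠ s(x,y))).image
      (fun w => c s(v,w))).image (Equiv.swap α β) := by
    rw [Finset.image_image]
    apply Finset.image_congr
    intro w _
    exact sw_touch hv w
  rw [this, image_swap_sdiff]

lemma PE_sw (hPE : PE G x y c) : PE G x y (sw G x y c α β v0) := by
  intro v a b hva hvb hab h1 h2
  by_cases hv : (KG G x y c α β).Reachable v0 v
  · rw [sw_touch hv, sw_touch hv]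
    exact fun h => hPE hva hvb hab h1 h2 ((Equiv.swap α β).injective h)
  · rw [sw_edge_of_not_reach hva h1 hv, sw_edge_of_not_reach hvb h2 hv]
    exact hPE hva hvb hab h1 h2

instance KG_decidable : DecidableRel (KG G x y c α β).Adj := fun u v =>
  decidable_of_iff (G.Adj u v ∧ s(u,v) ≠ s(x,y) ∧ (c s(u,v) = α ∨ c s(u,v) = β)) Iff.rfl

lemma Kdeg_le_two (hPE : PE G x y c) (hαβ : α ≠ β) (v : V) :
    (KG G x y c α β).degree v ≤ 2 := by
  rw [← SimpleGraph.card_neighborFinset_eq_degree]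
  have h := Finset.card_le_card_of_injOn (f := fun w => c s(v,w))
    (s := (KG G x y c α β).neighborFinset v) (t := {α, β}) ?_ ?_
  · exact h.trans (le_trans (Finset.card_insert_le _ _) (by simp))
  · intro w hw
    rw [Finset.mem_coe, SimpleGraph.mem_neighborFinset, KG_adj] at hw
    simpa using hw.2.2
  · intro w1 hw1 w2 hw2 he
    rw [Finset.mem_coe, SimpleGraph.mem_neighborFinset, KG_adj] at hw1 hw2
    by_contra hne
    exact hPE hw1.1 hw2.1 hne hw1.2.1 hw2.2.1 he

lemma Kdeg_le_one (hPE : PE G x y c) {v : V} (hm : α ∈ missP G x y v c) :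
    (KG G x y c α β).degree v ≤ 1 := by
  rw [← SimpleGraph.card_neighborFinset_eq_degree]
  have h := Finset.card_le_card_of_injOn (f := fun w => c s(v,w))
    (s := (KG G x y c α β).neighborFinset v) (t := {β}) ?_ ?_
  · simpa using h
  · intro w hw
    rw [Finset.mem_coe, SimpleGraph.mem_neighborFinset, KG_adj] at hw
    rcases hw.2.2 with h' | h'
    · exact absurd h' (mem_missP.mp hm w hw.1 hw.2.1)
    · simpa using h'
  · intro w1 hw1 w2 hw2 he
    rw [Finset.mem_coe, SimpleGraph.mem_neighborFinset, KG_adj] at hw1 hw2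
    by_contra hne
    exact hPE hw1.1 hw2.1 hne hw1.2.1 hw2.2.1 he
section NoThree
variable {K : SimpleGraph V}

lemma walk_first_entry {S : List V} :
    ∀ {a b : V} (_ : K.Walk a b), a ∉ S → b ∈ S →
      ∃ z r, K.Adj r z ∧ z ∈ S ∧ r ∉ S := by
  intro a b q
  induction q with
  | nil => intro ha hb; exact absurd hb ha
  | @cons u v w h q ih =>
    intro ha hb
    by_cases hv : v ∈ S
    · exact ⟨v, u, h, hv, ha⟩
    · exact ih hv hb

lemma path_endpoint_nbr {b d : V} (p : K.Walk b d) (hbd : b ≠ d) :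
    ∃ n, K.Adj b n ∧ n ∈ p.support := by
  cases p with
  | nil => exact absurd rfl hbd
  | @cons _ v _ h p' =>
    refine ⟨v, h, ?_⟩
    rw [SimpleGraph.Walk.support_cons]
    exact List.mem_cons_of_mem _ p'.start_mem_support

lemma path_interior_two :
    ∀ {st t : V} (p : K.Walk st t), p.IsPath → ∀ z ∈ p.support, z ≠ st → z ≠ t →
      ∃ n1 n2, n1 ≠ n2 ∧ K.Adj z n1 ∧ K.Adj z n2 ∧ n1 ∈ p.support ∧ n2 ∈ p.support := by
  intro st t p
  induction p with
  | nil => intro _ z hz hzs _; rw [SimpleGraph.Walk.support_nil, List.mem_singleton] at hz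
           exact absurd hz hzs
  | @cons u v w h p' ih =>
    intro hp z hz hzs hzt
    rw [SimpleGraph.Walk.support_cons, List.mem_cons] at hz
    rcases hz with rfl | hz
    · exact absurd rfl hzs
    · rcases eq_or_ne z v with rfl | hzv
      · -- z = v, second vertex; z ≠ t so p' is not nil
        cases p' with
        | nil => exact absurd rfl hzt
        | @cons _ vv _ h2 p'' =>
          refine ⟨u, vv, ?_, h.symm, h2, ?_, ?_⟩
          · intro he
            have hu : u ∉ (SimpleGraph.Walk.cons h2 p'').support :=
              ((SimpleGraph.Walk.cons_isPath_iff _ _).mp hp).2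
            apply hu
            rw [SimpleGraph.Walk.support_cons, he]
            exact List.mem_cons_of_mem _ p''.start_mem_support
          · rw [SimpleGraph.Walk.support_cons]; exact List.mem_cons_self
          · rw [SimpleGraph.Walk.support_cons]
            apply List.mem_cons_of_mem
            rw [SimpleGraph.Walk.support_cons]
            exact List.mem_cons_of_mem _ p''.start_mem_support
      · obtain ⟨n1, n2, hne, ha1, ha2, hm1, hm2⟩ :=
          ih ((SimpleGraph.Walk.cons_isPath_iff _ _).mp hp).1 z hz hzv hzt
        refine ⟨n1, n2, hne, ha1, ha2, ?_, ?_⟩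
        · rw [SimpleGraph.Walk.support_cons]; exact List.mem_cons_of_mem _ hm1
        · rw [SimpleGraph.Walk.support_cons]; exact List.mem_cons_of_mem _ hm2

variable [DecidableRel K.Adj]

lemma two_nbrs {v n1 n2 : V} (h1 : K.Adj v n1) (h2 : K.Adj v n2) (hne : n1 ≠ n2) :
    2 ≤ K.degree v := by
  rw [← SimpleGraph.card_neighborFinset_eq_degree]
  have hsub : ({n1, n2} : Finset V) ⊆ K.neighborFinset v := by
    intro w hw
    rw [Finset.mem_insert, Finset.mem_singleton] at hw
    rw [SimpleGraph.mem_neighborFinset]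
    rcases hw with rfl | rfl
    · exact h1
    · exact h2
  calc 2 = ({n1, n2} : Finset V).card := (Finset.card_pair hne).symm
    _ ≤ _ := Finset.card_le_card hsub

lemma three_nbrs {v n1 n2 n3 : V} (h1 : K.Adj v n1) (h2 : K.Adj v n2) (h3 : K.Adj v n3)
    (h12 : n1 ≠ n2) (h13 : n1 ≠ n3) (h23 : n2 ≠ n3) : 3 ≤ K.degree v := by
  rw [← SimpleGraph.card_neighborFinset_eq_degree]
  have hsub : ({n1, n2, n3} : Finset V) ⊆ K.neighborFinset v := by
    intro w hw
    simp only [Finset.mem_insert, Finset.mem_singleton] at hw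
    rw [SimpleGraph.mem_neighborFinset]
    rcases hw with rfl | rfl | rfl
    · exact h1
    · exact h2
    · exact h3
  calc 3 = ({n1, n2, n3} : Finset V).card := by
        rw [Finset.card_insert_of_notMem (by simp [h12, h13]), Finset.card_pair h23]
    _ ≤ _ := Finset.card_le_card hsub

lemma no_three (hdeg : ∀ v, K.degree v ≤ 2) {a b d : V} (hab : a ≠ b) (had : a ≠ d)
    (hbd : b ≠ d) (ha : K.degree a ≤ 1) (hb : K.degree b ≤ 1) (hd : K.degree d ≤ 1)
    (hrab : K.Reachable a b) (hrad : K.Reachable a d) : False := by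
  classical
  have hrbd : K.Reachable b d := hrab.symm.trans hrad
  obtain ⟨w0⟩ := hrbd
  set p : K.Walk b d := w0.toPath.1 with hpdef
  have hp : p.IsPath := w0.toPath.2
  by_cases hmem : a ∈ p.support
  · obtain ⟨n1, n2, hne, ha1, ha2, _, _⟩ := path_interior_two p hp a hmem hab had
    exact absurd (two_nbrs ha1 ha2 hne) (by omega)
  · obtain ⟨q⟩ := hrab
    obtain ⟨z, r, hadj, hzS, hrS⟩ := walk_first_entry q hmem p.start_mem_support
    rcases eq_or_ne z b with rfl | hzb
    · obtain ⟨n, hn, hnS⟩ := path_endpoint_nbr p hbd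
      have : r ≠ n := fun h => hrS (h ▸ hnS)
      exact absurd (two_nbrs hadj.symm hn this) (by omega)
    · rcases eq_or_ne z d with rfl | hzd
      · obtain ⟨n, hn, hnS⟩ := path_endpoint_nbr p.reverse hbd.symm
        rw [SimpleGraph.Walk.support_reverse, List.mem_reverse] at hnS
        have : r ≠ n := fun h => hrS (h ▸ hnS)
        exact absurd (two_nbrs hadj.symm hn this) (by omega)
      · obtain ⟨n1, n2, hne, ha1, ha2, hm1, hm2⟩ := path_interior_two p hp z hzS hzb hzd
        have hr1 : r ≠ n1 := fun h => hrS (h ▸ hm1)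
        have hr2 : r ≠ n2 := fun h => hrS (h ▸ hm2)
        exact absurd (three_nbrs hadj.symm ha1 ha2 hr1 hr2 hne)
          (by have := hdeg z; omega)

end NoThree
lemma Kdeg_le_one' (hPE : PE G x y c) {v : V} (hm : β ∈ missP G x y v c) :
    (KG G x y c α β).degree v ≤ 1 := by
  rw [← SimpleGraph.card_neighborFinset_eq_degree]
  have h := Finset.card_le_card_of_injOn (f := fun w => c s(v,w))
    (s := (KG G x y c α β).neighborFinset v) (t := {α}) ?_ ?_
  · simpa using h
  · intro w hw
    rw [Finset.mem_coe, SimpleGraph.mem_neighborFinset, KG_adj] at hw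
    rcases hw.2.2 with h' | h'
    · simpa using h'
    · exact absurd h' (mem_missP.mp hm w hw.1 hw.2.1)
  · intro w1 hw1 w2 hw2 he
    rw [Finset.mem_coe, SimpleGraph.mem_neighborFinset, KG_adj] at hw1 hw2
    by_contra hne
    exact hPE hw1.1 hw2.1 hne hw1.2.1 hw2.2.1 he

lemma mf_transport {c c' : Sym2 V → Fin k} {L : List V} (hMF : MF G x y c L)
    (h1 : ∀ w ∈ L, w ≠ y → c' s(x,w) = c s(x,w))
    (h2 : ∀ v ∈ L.tail, missP G x y v c ⊆ missP G x y v c') : MF G x y c' L := by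
  induction hMF with
  | base => exact MF.base
  | @cons L' w hMF hadj hni hne hjust ih =>
    refine MF.cons ?_ hadj hni hne ?_
    · apply ih
      · intro w' hw' hw'y; exact h1 w' (List.mem_cons_of_mem _ hw') hw'y
      · intro v' hv'
        apply h2
        rcases L' with _ | ⟨a, L''⟩
        · simp at hv'
        · exact List.mem_cons_of_mem _ hv'
    · obtain ⟨v, hv, hj⟩ := hjust
      refine ⟨v, hv, ?_⟩
      rw [h1 w (List.mem_cons_self) hne]
      exact h2 v hv hj

lemma missP_x_nonempty (hxy : G.Adj x y) (hdx : G.degree x ≤ k)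
    {c : Sym2 V → Fin k} : (missP G x y x c).Nonempty := by
  rw [missP, Finset.sdiff_nonempty]
  intro hsub
  have h1 := Finset.card_le_card hsub
  rw [Finset.card_univ, Fintype.card_fin] at h1
  have h2 := Finset.card_image_le (s := (G.neighborFinset x).filter
    (fun w => s(x,w) ≠ s(x,y))) (f := fun w => c s(x,w))
  have h3 : ((G.neighborFinset x).filter (fun w => s(x,w) ≠ s(x,y))) ⊆
      (G.neighborFinset x).erase y := by
    intro w hw
    rw [Finset.mem_filter] at hw
    rw [Finset.mem_erase]
    exact ⟨fun h => hw.2 (by rw [h]), hw.1⟩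
  have h4 := Finset.card_le_card h3
  have h5 : ((G.neighborFinset x).erase y).card = G.degree x - 1 := by
    rw [Finset.card_erase_of_mem (SimpleGraph.mem_neighborFinset _ _ _ |>.mpr hxy)]
    rfl
  have h6 : 1 ≤ G.degree x := by
    rw [← SimpleGraph.card_neighborFinset_eq_degree]
    exact Finset.card_pos.mpr ⟨y, (SimpleGraph.mem_neighborFinset _ _ _).mpr hxy⟩
  omega
theorem mf_elem (hnK : ∀ c' : Sym2 V → Fin k, ¬ ProperG G c') (hxy : G.Adj x y)
    (hdx : G.degree x ≤ k) :
    ∀ (n : ℕ) (c : Sym2 V → Fin k) (L : List V), L.length ≤ n → MF G x y c L →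
      PE G x y c → ∀ u v, u ∈ L → v ∈ L → u ≠ v →
      ∀ δ, δ ∈ missP G x y u c → δ ∈ missP G x y v c → False := by
  intro n
  induction n with
  | zero =>
    intro c L hlen _ _ u v hu _ _ _ _ _
    rw [List.length_eq_zero_iff.mp (Nat.le_zero.mp hlen)] at hu
    exact absurd hu List.not_mem_nil
  | succ n ih =>
    intro c L hlen hMF hPE u v hu hv huv δ hδu hδv
    cases L with
    | nil => exact absurd hu List.not_mem_nil
    | cons w L' =>
      -- the main argument: head w vs a tail element v'
      have key : ∀ v' ∈ L', ∀ δ', δ' ∈ missP G x y w c → δ' ∈ missP G x y v' c →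
          False := by
        intro v' hv' δ' hδw hδv'
        have hMFL' : MF G x y c L' := mf_of_cons hMF (List.ne_nil_of_mem hv')
        have hlenL' : L'.length ≤ n := by simpa using hlen
        obtain ⟨α, hα⟩ := missP_x_nonempty hxy hdx (c := c)
        have hwmem : w ∈ w :: L' := List.mem_cons_self
        have hv'mem : v' ∈ w :: L' := List.mem_cons_of_mem _ hv'
        have hαδ : α ≠ δ' := by
          rintro rfl
          exact mfA hnK hxy hMF hPE hwmem hα hδw
        have hnd : (w :: L').Nodup := mf_nodup hMF
        have hwv' : w ≠ v' := fun h => (List.nodup_cons.mp hnd).1 (h ▸ hv')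
        have hv'x : v' ≠ x := (mf_mem_adj hxy hMF v' hv'mem).ne'
        have hwx : w ≠ x := (mf_mem_adj hxy hMF w hwmem).ne'
        by_cases hvxr : (KG G x y c α δ').Reachable v' x
        · -- CASE B : v' reaches x; swap the component of w
          have hwxr : ¬ (KG G x y c α δ').Reachable w x := by
            intro hwr
            exact no_three (Kdeg_le_two hPE hαδ) (Ne.symm hv'x) (Ne.symm hwx)
              (Ne.symm hwv') (Kdeg_le_one hPE hα) (Kdeg_le_one' hPE hδv')
              (Kdeg_le_one' hPE hδw) hvxr.symm hwr.symm
          have hwv'r : ¬ (KG G x y c α δ').Reachable w v' :=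
            fun h => hwxr (h.trans hvxr)
          set c' := sw G x y c α δ' w with hc'
          have hPE' : PE G x y c' := PE_sw hPE
          have hMF'' : MF G x y c' (w :: L') := by
            apply mf_transport hMF
            · intro w' hw' hw'y
              exact sw_edge_of_not_reach (mf_mem_adj hxy hMF w' hw') (sxne hw'y) hwxr
            · intro v'' hv''
              have hv''L : v'' ∈ w :: L' := List.mem_cons_of_mem _ hv''
              intro γ hγ
              by_cases hr : (KG G x y c α δ').Reachable w v''
              · rw [missP_sw_reach hr, Finset.mem_image]
                rcases eq_or_ne γ α with rfl | hγα
                · exact absurd hδw (fun _ => mfA hnK hxy hMF hPE hv''L hα hγ)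
                rcases eq_or_ne γ δ' with rfl | hγδ
                · exact absurd hδw (fun _ => ih c L' hlenL' hMFL' hPE v'' v' hv'' hv'
                    (fun h => hwv'r (h ▸ hr)) γ hγ hδv')
                · exact ⟨γ, hγ, Equiv.swap_apply_of_ne_of_ne hγα hγδ⟩
              · rw [missP_sw_not_reach hr]
                exact hγ
          have hαx' : α ∈ missP G x y x c' := by
            rw [hc', missP_sw_not_reach hwxr]
            exact hα
          have hαw' : α ∈ missP G x y w c' := by
            rw [hc', missP_sw_reach (SimpleGraph.Reachable.refl w), Finset.mem_image]
            exact ⟨δ', hδw, Equiv.swap_apply_right α δ'⟩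
          exact mfA hnK hxy hMF'' hPE' hwmem hαx' hαw'
        · -- CASE A : v' does not reach x; swap the component of v'
          obtain ⟨A, B, hAB⟩ := List.append_of_mem hv'
          have hMFvB : MF G x y c (v' :: B) := by
            apply mf_suffix (w :: A) (v' :: B)
            · rw [List.cons_append, ← hAB]; exact hMF
            · simp
          have hv'B : v' ∉ B := by
            have : (v' :: B).Nodup := by
              have h' : L'.Nodup := (List.nodup_cons.mp hnd).2
              rw [hAB] at h'
              exact h'.of_append_right
            exact (List.nodup_cons.mp this).1
          set c' := sw G x y c α δ' v' with hc'
          have hPE' : PE G x y c' := PE_sw hPE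
          have hMF'' : MF G x y c' (v' :: B) := by
            apply mf_transport hMFvB
            · intro w' hw' hw'y
              have hw'L : w' ∈ w :: L' := by
                apply List.mem_cons_of_mem
                rw [hAB]
                rcases List.mem_cons.mp hw' with rfl | h'
                · exact List.mem_append_right _ (List.mem_cons_self)
                · exact List.mem_append_right _ (List.mem_cons_of_mem _ h')
              exact sw_edge_of_not_reach (mf_mem_adj hxy hMF w' hw'L) (sxne hw'y) hvxr
            · intro v'' hv''
              have hv''B : v'' ∈ B := hv''
              have hv''L' : v'' ∈ L' := by
                rw [hAB]; exact List.mem_append_right _ (List.mem_cons_of_mem _ hv''B)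
              have hv''L : v'' ∈ w :: L' := List.mem_cons_of_mem _ hv''L'
              intro γ hγ
              by_cases hr : (KG G x y c α δ').Reachable v' v''
              · rw [missP_sw_reach hr, Finset.mem_image]
                rcases eq_or_ne γ α with rfl | hγα
                · exact absurd hδw (fun _ => mfA hnK hxy hMF hPE hv''L hα hγ)
                rcases eq_or_ne γ δ' with rfl | hγδ
                · exact absurd hδw (fun _ => ih c L' hlenL' hMFL' hPE v'' v' hv''L' hv'
                    (fun h => hv'B (h ▸ hv''B)) γ hγ hδv')
                · exact ⟨γ, hγ, Equiv.swap_apply_of_ne_of_ne hγα hγδ⟩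
              · rw [missP_sw_not_reach hr]
                exact hγ
          have hαx' : α ∈ missP G x y x c' := by
            rw [hc', missP_sw_not_reach hvxr]
            exact hα
          have hαv'' : α ∈ missP G x y v' c' := by
            rw [hc', missP_sw_reach (SimpleGraph.Reachable.refl v'), Finset.mem_image]
            exact ⟨δ', hδv', Equiv.swap_apply_right α δ'⟩
          exact mfA hnK hxy hMF'' hPE' (List.mem_cons_self) hαx' hαv''
      rcases List.mem_cons.mp hu with rfl | hu'
      · rcases List.mem_cons.mp hv with rfl | hv'
        · exact huv rfl
        · exact key v hv' δ hδu hδv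
      · rcases List.mem_cons.mp hv with rfl | hv'
        · exact key u hu' δ hδv hδu
        · have hMFL' : MF G x y c L' := mf_of_cons hMF (List.ne_nil_of_mem hu')
          exact ih c L' (by simpa using hlen) hMFL' hPE u v hu' hv' huv δ hδu hδv
lemma mf_y_mem {c : Sym2 V → Fin k} {L : List V} (hMF : MF G x y c L) : y ∈ L := by
  induction hMF with
  | base => exact List.mem_singleton_self _
  | cons _ _ _ _ _ ih => exact List.mem_cons_of_mem _ ih

lemma missP_card (hPE : PE G x y c) (v : V) :
    (missP G x y v c).card =
      k - ((G.neighborFinset v).filter (fun w => s(v,w) ≠ s(x,y))).card := by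
  rw [missP, Finset.card_sdiff_of_subset (Finset.subset_univ _), Finset.card_univ, Fintype.card_fin,
    Finset.card_image_of_injOn]
  intro w1 hw1 w2 hw2 he
  rw [Finset.mem_coe, Finset.mem_filter, SimpleGraph.mem_neighborFinset] at hw1 hw2
  by_contra hne
  exact hPE hw1.1 hw2.1 hne hw1.2 hw2.2 he

lemma filter_at_y (hxy : G.Adj x y) :
    ((G.neighborFinset y).filter (fun w => s(y,w) ≠ s(x,y))) =
      (G.neighborFinset y).erase x := by
  ext w
  rw [Finset.mem_filter, Finset.mem_erase]
  constructor
  · rintro ⟨h1, h2⟩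
    refine ⟨fun h => h2 ?_, h1⟩
    rw [h, Sym2.eq_iff]
    right; exact ⟨rfl, rfl⟩
  · rintro ⟨h1, h2⟩
    refine ⟨h2, fun h => ?_⟩
    rw [Sym2.eq_iff] at h
    rcases h with ⟨h3, _⟩ | ⟨_, h4⟩
    · exact hxy.ne' h3
    · exact h1 h4

lemma filter_at_other {v : V} (hvx : v ≠ x) (hvy : v ≠ y) :
    ((G.neighborFinset v).filter (fun w => s(v,w) ≠ s(x,y))) = G.neighborFinset v :=
  Finset.filter_true_of_mem (fun w _ => ne_hole hvx hvy)
end VAL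

open VAL in
/-- Vizing's Adjacency Lemma. -/
theorem stmt1 {V : Type*} [Fintype V] [DecidableEq V] (G : SimpleGraph V)
    [DecidableRel G.Adj] (k : ℕ) (hk : 2 ≤ k) (hG : IsKCritical G k)
    {x y : V} (hxy : G.Adj x y) :
    G.maxDegree - G.degree y + 1 ≤
      (((G.neighborFinset x).erase y).filter fun z => G.degree z = G.maxDegree).card := by
  classical
  obtain ⟨hΔ, hχ, hcrit⟩ := hG
  -- no proper k-edge-coloring of G exists
  have hnK : ∀ c' : Sym2 V → Fin k, ¬ VAL.ProperG G c' := by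
    intro c' hc'
    have hproper : IsProperEdgeColoring G k c' := by
      intro e₁ he₁ e₂ he₂ hne hshare
      obtain ⟨z, hz1, hz2⟩ := hshare
      obtain ⟨a, rfl⟩ := Sym2.mem_iff_exists.mp hz1
      obtain ⟨b, rfl⟩ := Sym2.mem_iff_exists.mp hz2
      exact hc' ((SimpleGraph.mem_edgeSet G).mp he₁) ((SimpleGraph.mem_edgeSet G).mp he₂)
        (fun h => hne (by rw [h]))
    have hle : chromIndex G ≤ k := Nat.sInf_le ⟨c', hproper⟩
    omega
  -- a proper k-edge-coloring of G - xy exists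
  have hedge : s(x,y) ∈ G.edgeSet := (SimpleGraph.mem_edgeSet G).mpr hxy
  have hH : sInf {n | ∃ c : Sym2 V → Fin n,
      IsProperEdgeColoring (G.deleteEdges {s(x,y)}) n c} = k := hcrit _ hedge
  have hSne : {n | ∃ c : Sym2 V → Fin n,
      IsProperEdgeColoring (G.deleteEdges {s(x,y)}) n c}.Nonempty := by
    rcases Set.eq_empty_or_nonempty {n | ∃ c : Sym2 V → Fin n,
      IsProperEdgeColoring (G.deleteEdges {s(x,y)}) n c} with he | h
    · rw [he, Nat.sInf_empty] at hH; omega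
    · exact h
  have hkS := Nat.sInf_mem hSne
  rw [hH] at hkS
  obtain ⟨c, hc⟩ := hkS
  have hPE : VAL.PE G x y c := by
    intro v a b hva hvb hab h1 h2
    have e1 : s(v,a) ∈ (G.deleteEdges {s(x,y)}).edgeSet := by
      rw [SimpleGraph.mem_edgeSet, SimpleGraph.deleteEdges_adj]
      exact ⟨hva, by simpa using h1⟩
    have e2 : s(v,b) ∈ (G.deleteEdges {s(x,y)}).edgeSet := by
      rw [SimpleGraph.mem_edgeSet, SimpleGraph.deleteEdges_adj]
      exact ⟨hvb, by simpa using h2⟩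
    exact hc _ e1 _ e2 (fun h => hab (Sym2.congr_right.mp h))
      ⟨v, Sym2.mem_mk_left _ _, Sym2.mem_mk_left _ _⟩
  have hdx : G.degree x ≤ k := hΔ ▸ G.degree_le_maxDegree x
  have hdy : G.degree y ≤ k := hΔ ▸ G.degree_le_maxDegree y
  have hdy1 : 1 ≤ G.degree y := by
    rw [← SimpleGraph.card_neighborFinset_eq_degree]
    exact Finset.card_pos.mpr ⟨x, (SimpleGraph.mem_neighborFinset _ _ _).mpr hxy.symm⟩
  -- maximal multifan
  set P : ℕ → Prop := fun n => ∃ L, VAL.MF G x y c L ∧ L.length = n with hPdef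
  have hbound : ∀ L, VAL.MF G x y c L → L.length ≤ Fintype.card V :=
    fun L hL => (VAL.mf_nodup hL).length_le_card
  have hcard1 : 1 ≤ Fintype.card V := Fintype.card_pos_iff.mpr ⟨x⟩
  have hP1 : P 1 := ⟨[y], MF.base, rfl⟩
  set n0 := Nat.findGreatest P (Fintype.card V) with hn0
  have hPn0 : P n0 := Nat.findGreatest_spec hcard1 hP1
  obtain ⟨L, hMF, hlen⟩ := hPn0
  have hmax : ∀ w', ¬ VAL.MF G x y c (w' :: L) := by
    intro w' hMF'
    have h1 : P (w' :: L).length := ⟨w' :: L, hMF', rfl⟩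
    have h2 : (w' :: L).length = n0 + 1 := by simp [hlen]
    have hb2 : n0 + 1 ≤ Fintype.card V := by rw [← h2]; exact hbound _ hMF'
    have h3 : ¬ P (n0 + 1) :=
      Nat.findGreatest_is_greatest (by rw [← hn0]; exact Nat.lt_succ_self n0) hb2
    exact h3 (h2 ▸ h1)
  -- closure of the maximal fan
  have hclose : ∀ u ∈ L, ∀ γ ∈ VAL.missP G x y u c,
      ∃ v ∈ L, v ≠ y ∧ G.Adj x v ∧ c s(x,v) = γ := by
    intro u hu γ hγ
    have hγx : γ ∉ VAL.missP G x y x c :=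
      fun h => VAL.mfA hnK hxy hMF hPE hu h hγ
    rw [VAL.mem_missP] at hγx
    push_neg at hγx
    obtain ⟨w, hadjw, hwne, heq⟩ := hγx
    have hwy : w ≠ y := fun h => hwne (by rw [h])
    by_cases hwL : w ∈ L
    · exact ⟨w, hwL, hwy, hadjw, heq⟩
    · exact absurd (MF.cons hMF hadjw hwL hwy ⟨u, hu, heq ▸ hγ⟩) (hmax w)
  -- counting
  set T : Finset V := L.toFinset with hT
  have hTcard : T.card = n0 := by rw [hT, List.toFinset_card_of_nodup (VAL.mf_nodup hMF), hlen]
  have hyT : y ∈ T := by rw [hT, List.mem_toFinset]; exact VAL.mf_y_mem hMF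
  have hdisj : ∀ u ∈ T, ∀ v ∈ T, u ≠ v →
      Disjoint (VAL.missP G x y u c) (VAL.missP G x y v c) := by
    intro u hu v hv huv
    rw [Finset.disjoint_left]
    intro δ hδu hδv
    exact VAL.mf_elem hnK hxy hdx (Fintype.card V) c L (hbound L hMF) hMF hPE u v
      (List.mem_toFinset.mp hu) (List.mem_toFinset.mp hv) huv δ hδu hδv
  have hbi : (T.biUnion (fun u => VAL.missP G x y u c)).card =
      ∑ u ∈ T, (VAL.missP G x y u c).card := Finset.card_biUnion hdisj
  have hsub : T.biUnion (fun u => VAL.missP G x y u c) ⊆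
      (T.erase y).image (fun v => c s(x,v)) := by
    intro γ hγ
    rw [Finset.mem_biUnion] at hγ
    obtain ⟨u, huT, hγu⟩ := hγ
    obtain ⟨v, hvL, hvy, _, heq⟩ := hclose u (List.mem_toFinset.mp huT) γ hγu
    rw [Finset.mem_image]
    exact ⟨v, Finset.mem_erase.mpr ⟨hvy, List.mem_toFinset.mpr hvL⟩, heq⟩
  have hsum_le : ∑ u ∈ T, (VAL.missP G x y u c).card ≤ n0 - 1 := by
    rw [← hbi]
    calc (T.biUnion (fun u => VAL.missP G x y u c)).card
        ≤ ((T.erase y).image (fun v => c s(x,v))).card := Finset.card_le_card hsub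
      _ ≤ (T.erase y).card := Finset.card_image_le
      _ = n0 - 1 := by rw [Finset.card_erase_of_mem hyT, hTcard]
  -- evaluate the cards
  have hcy : (VAL.missP G x y y c).card = k - (G.degree y - 1) := by
    rw [VAL.missP_card hPE, VAL.filter_at_y hxy,
      Finset.card_erase_of_mem ((SimpleGraph.mem_neighborFinset _ _ _).mpr hxy.symm)]
    rfl
  have hcother : ∀ u ∈ T.erase y, (VAL.missP G x y u c).card = k - G.degree u := by
    intro u hu
    have huy : u ≠ y := (Finset.mem_erase.mp hu).1
    have huL : u ∈ L := List.mem_toFinset.mp (Finset.mem_erase.mp hu).2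
    have hux : u ≠ x := (VAL.mf_mem_adj hxy hMF u huL).ne'
    rw [VAL.missP_card hPE, VAL.filter_at_other hux huy,
      SimpleGraph.card_neighborFinset_eq_degree]
  have hsplit : (VAL.missP G x y y c).card +
      ∑ u ∈ T.erase y, (VAL.missP G x y u c).card =
      ∑ u ∈ T, (VAL.missP G x y u c).card :=
    Finset.add_sum_erase T (fun u => (VAL.missP G x y u c).card) hyT
  -- full-degree vertices
  set A : Finset V := (T.erase y).filter (fun z => G.degree z = k) with hA
  have hAc : A.card + ((T.erase y).filter (fun z => ¬ G.degree z = k)).card =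
      (T.erase y).card := Finset.card_filter_add_card_filter_not _
  have hrest : ((T.erase y).filter (fun z => ¬ G.degree z = k)).card ≤
      ∑ u ∈ T.erase y, (VAL.missP G x y u c).card := by
    calc ((T.erase y).filter (fun z => ¬ G.degree z = k)).card
        = ∑ u ∈ (T.erase y).filter (fun z => ¬ G.degree z = k), 1 := by
          rw [Finset.card_eq_sum_ones]
      _ ≤ ∑ u ∈ (T.erase y).filter (fun z => ¬ G.degree z = k),
            (VAL.missP G x y u c).card := by
          apply Finset.sum_le_sum
          intro u hu
          have hu' := Finset.mem_filter.mp hu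
          have hne := hu'.2
          have hle : G.degree u ≤ k := hΔ ▸ G.degree_le_maxDegree u
          rw [hcother u hu'.1]
          omega
      _ ≤ ∑ u ∈ T.erase y, (VAL.missP G x y u c).card :=
          Finset.sum_le_sum_of_subset (Finset.filter_subset _ _)
  have hEcard : (T.erase y).card = n0 - 1 := by
    rw [Finset.card_erase_of_mem hyT, hTcard]
  -- conclude k - d + 1 ≤ A.card
  have hmain : k - G.degree y + 1 ≤ A.card := by
    have h1 := hsum_le
    rw [← hsplit, hcy] at h1
    omega
  -- A is contained in the goal set
  have hsubA : A ⊆ ((G.neighborFinset x).erase y).filter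
      (fun z => G.degree z = G.maxDegree) := by
    intro u hu
    obtain ⟨hu1, hu2⟩ := Finset.mem_filter.mp hu
    have huy : u ≠ y := (Finset.mem_erase.mp hu1).1
    have huL : u ∈ L := List.mem_toFinset.mp (Finset.mem_erase.mp hu1).2
    rw [Finset.mem_filter, Finset.mem_erase, SimpleGraph.mem_neighborFinset]
    exact ⟨⟨huy, VAL.mf_mem_adj hxy hMF u huL⟩, by rw [hΔ]; exact hu2⟩
  calc G.maxDegree - G.degree y + 1 = k - G.degree y + 1 := by rw [hΔ]
    _ ≤ A.card := hmain
    _ ≤ _ := Finset.card_le_card hsubA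
end

section
/- Let G be a simple graph with maximum degree k ≥ 2 and let H be a Meredith extension of G. Then α(G) > |V(G)|/2 if and only if α(H) > |V(H)|/2, where α denotes the independence number. Equivalently, α(G) ≤ |V(G)|/2 if and only if α(H) ≤ |V(H)|/2. -/
open SimpleGraph Finset

section Aux

variable {V : Type*} (G : SimpleGraph V) (v : V) (k : ℕ) (f : V → Fin k)

lemma madj_ll (a b : {w : V // w ≠ v}) :
    (meredith G v k f).Adj (Sum.inl a) (Sum.inl b) ↔ G.Adj a.1 b.1 := by
  simp only [meredith, fromRel_adj]
  constructor
  · rintro ⟨hne, h | h⟩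
    exacts [h, h.symm]
  · exact fun h => ⟨by simp [Subtype.ext_iff, h.ne], Or.inl h⟩

lemma madj_lr (a : {w : V // w ≠ v}) (i : Fin k) :
    (meredith G v k f).Adj (Sum.inl a) (Sum.inr (Sum.inl i)) ↔ G.Adj v a.1 ∧ f a.1 = i := by
  simp only [meredith, fromRel_adj]
  constructor
  · rintro ⟨hne, h | h⟩
    exacts [h, h.elim]
  · exact fun h => ⟨by simp, Or.inl h⟩

lemma madj_lrr (a : {w : V // w ≠ v}) (j : Fin (k-1)) :
    ¬ (meredith G v k f).Adj (Sum.inl a) (Sum.inr (Sum.inr j)) := by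
  simp only [meredith, fromRel_adj]
  rintro ⟨hne, h | h⟩ <;> exact h

lemma madj_bip (i : Fin k) (j : Fin (k-1)) :
    (meredith G v k f).Adj (Sum.inr (Sum.inl i)) (Sum.inr (Sum.inr j)) := by
  simp only [meredith, fromRel_adj]
  exact ⟨by simp, Or.inl trivial⟩

lemma madj_rr (i i' : Fin k) :
    ¬ (meredith G v k f).Adj (Sum.inr (Sum.inl i)) (Sum.inr (Sum.inl i')) := by
  simp only [meredith, fromRel_adj]
  rintro ⟨hne, h | h⟩ <;> exact h

lemma madj_rrr (j j' : Fin (k-1)) :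
    ¬ (meredith G v k f).Adj (Sum.inr (Sum.inr j)) (Sum.inr (Sum.inr j')) := by
  simp only [meredith, fromRel_adj]
  rintro ⟨hne, h | h⟩ <;> exact h

end Aux

section Indep

variable {V : Type*} [Fintype V] (G : SimpleGraph V)

lemma indepSet_bdd : BddAbove {n | ∃ s : Finset V, IsIndep G s ∧ s.card = n} :=
  ⟨Fintype.card V, fun _ ⟨t, _, ht⟩ => ht ▸ t.card_le_univ⟩

lemma card_le_indepNum {s : Finset V} (h : IsIndep G s) : s.card ≤ _root_.indepNum G :=
  le_csSup (indepSet_bdd G) ⟨s, h, rfl⟩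

lemma exists_indepNum : ∃ s : Finset V, IsIndep G s ∧ s.card = _root_.indepNum G := by
  have h : _root_.indepNum G ∈ {n | ∃ s : Finset V, IsIndep G s ∧ s.card = n} := by
    apply Nat.sSup_mem _ (indepSet_bdd G)
    exact ⟨0, ∅, by simp [IsIndep], by simp⟩
  exact h

end Indep

theorem indepNum_meredith {V : Type*} [Fintype V] [DecidableEq V] (G : SimpleGraph V)
    (k : ℕ) (hk : 2 ≤ k) (v : V) (f : V → Fin k) :
    _root_.indepNum (meredith G v k f) = _root_.indepNum G + (k - 1) := by
  apply le_antisymm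
  · -- upper bound
    obtain ⟨s, hs, hcard⟩ := exists_indepNum (meredith G v k f)
    rw [← hcard]
    set A : Finset {w : V // w ≠ v} := s.toLeft with hA
    set R := s.toRight with hR
    set B : Finset (Fin k) := R.toLeft with hB
    set C : Finset (Fin (k-1)) := R.toRight with hC
    have hsum : A.card + (B.card + C.card) = s.card := by
      rw [hB, hC, card_toLeft_add_card_toRight, hA, hR, card_toLeft_add_card_toRight]
    have hmemA : ∀ a ∈ A, Sum.inl a ∈ s := fun a ha => mem_toLeft.1 ha
    have hmemB : ∀ i ∈ B, Sum.inr (Sum.inl i) ∈ s := fun i hi => mem_toRight.1 (mem_toLeft.1 hi)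
    have hmemC : ∀ j ∈ C, Sum.inr (Sum.inr j) ∈ s := fun j hj => mem_toRight.1 (mem_toRight.1 hj)
    have hAimg : IsIndep G (A.image Subtype.val) := by
      intro a ha b hb hne hadj
      simp only [coe_image, Set.mem_image, mem_coe] at ha hb
      obtain ⟨a', ha', rfl⟩ := ha
      obtain ⟨b', hb', rfl⟩ := hb
      exact hs (hmemA _ ha') (hmemA _ hb') (by simpa [Subtype.ext_iff] using hne)
        ((madj_ll G v k f a' b').2 hadj)
    have hAcard : (A.image Subtype.val).card = A.card :=
      card_image_of_injective _ Subtype.val_injective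
    have hCle : C.card ≤ k - 1 := by
      simpa using C.card_le_univ
    rcases C.eq_empty_or_nonempty with hCe | ⟨j, hj⟩
    · -- C empty
      have hBle : B.card ≤ k := by simpa using B.card_le_univ
      rcases eq_or_lt_of_le hBle with hBk | hBlt
      · -- B = univ
        have hBu : B = univ := eq_univ_of_card _ (by simpa using hBk)
        have hvn : v ∉ A.image Subtype.val := by
          intro hmem
          obtain ⟨a, -, hav⟩ := mem_image.1 hmem
          exact a.2 hav
        have hins : IsIndep G (insert v (A.image Subtype.val)) := by
          have hnov : ∀ a ∈ A, ¬ G.Adj v a.1 := by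
            intro a ha hadj
            have hiB : Sum.inr (Sum.inl (f a.1)) ∈ s := hmemB _ (by rw [hBu]; exact mem_univ _)
            exact hs (hmemA _ ha) hiB (by simp)
              ((madj_lr G v k f a (f a.1)).2 ⟨hadj, rfl⟩)
          intro x hx y hy hne hadj
          simp only [coe_insert, Set.mem_insert_iff, coe_image, Set.mem_image, mem_coe] at hx hy
          rcases hx with rfl | ⟨a, ha, rfl⟩
          · rcases hy with rfl | ⟨b, hb, rfl⟩
            · exact hne rfl
            · exact hnov b hb hadj
          · rcases hy with rfl | ⟨b, hb, rfl⟩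
            · exact hnov a ha hadj.symm
            · exact hAimg (by rw [coe_image]; exact Set.mem_image_of_mem _ ha)
                (by rw [coe_image]; exact Set.mem_image_of_mem _ hb) hne hadj
        have h1 : A.card + 1 ≤ _root_.indepNum G := by
          have := card_le_indepNum G hins
          rwa [card_insert_of_notMem hvn, hAcard] at this
        rw [hCe] at hsum
        simp only [card_empty, add_zero] at hsum
        omega
      · -- B.card < k
        have : A.card ≤ _root_.indepNum G := hAcard ▸ card_le_indepNum G hAimg
        rw [hCe] at hsum
        simp at hsum
        omega
    · -- C nonempty: B empty
      have hBe : B = ∅ := by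
        by_contra hBe
        obtain ⟨i, hi⟩ := nonempty_iff_ne_empty.2 hBe
        exact hs (hmemB _ hi) (hmemC _ hj) (by simp) (madj_bip G v k f i j)
      have : A.card ≤ _root_.indepNum G := hAcard ▸ card_le_indepNum G hAimg
      rw [hBe] at hsum
      simp at hsum
      omega
  · -- lower bound
    obtain ⟨s, hs, hcard⟩ := exists_indepNum G
    rw [← hcard]
    by_cases hv : v ∈ s
    · -- use K_k side
      set t : Finset ({w : V // w ≠ v} ⊕ (Fin k ⊕ Fin (k-1))) :=
        ((s.erase v).subtype (· ≠ v)).disjSum ((univ : Finset (Fin k)).disjSum ∅) with ht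
      have hmem : ∀ a : {w : V // w ≠ v}, Sum.inl a ∈ t ↔ a.1 ∈ s.erase v := by
        intro a
        simp [ht, mem_subtype]
      have htind : IsIndep (meredith G v k f) t := by
        intro x hx y hy hne hadj
        rw [mem_coe] at hx hy
        rcases x with a | i | j <;> rcases y with b | i' | j'
        · exact hs (mem_of_mem_erase ((hmem a).1 hx)) (mem_of_mem_erase ((hmem b).1 hy))
            (by simpa [Subtype.ext_iff] using hne) ((madj_ll G v k f a b).1 hadj)
        · obtain ⟨hga, -⟩ := (madj_lr G v k f a i').1 hadj
          exact hs hv (mem_of_mem_erase ((hmem a).1 hx)) (Ne.symm a.2) hga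
        · exact madj_lrr G v k f a j' hadj
        · obtain ⟨hga, -⟩ := (madj_lr G v k f b i).1 hadj.symm
          exact hs hv (mem_of_mem_erase ((hmem b).1 hy)) (Ne.symm b.2) hga
        · exact madj_rr G v k f i i' hadj
        · simp [ht] at hy
        · exact madj_lrr G v k f b j hadj.symm
        · simp [ht] at hx
        · exact madj_rrr G v k f j j' hadj
      have hcardt : t.card = s.card + (k - 1) := by
        have h1 : ((s.erase v).subtype (· ≠ v)).card = (s.erase v).card := by
          rw [card_subtype, filter_true_of_mem]
          intro x hx
          exact ne_of_mem_erase hx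
        have h2 : (s.erase v).card = s.card - 1 := card_erase_of_mem hv
        have h3 : 1 ≤ s.card := card_pos.2 ⟨v, hv⟩
        simp only [ht, card_disjSum, h1, h2, card_univ, Fintype.card_fin, card_empty]
        omega
      exact hcardt ▸ card_le_indepNum _ htind
    · -- use K_{k-1} side
      set t : Finset ({w : V // w ≠ v} ⊕ (Fin k ⊕ Fin (k-1))) :=
        (s.subtype (· ≠ v)).disjSum ((∅ : Finset (Fin k)).disjSum univ) with ht
      have hmem : ∀ a : {w : V // w ≠ v}, Sum.inl a ∈ t ↔ a.1 ∈ s := by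
        intro a
        simp [ht, mem_subtype]
      have htind : IsIndep (meredith G v k f) t := by
        intro x hx y hy hne hadj
        rw [mem_coe] at hx hy
        rcases x with a | i | j <;> rcases y with b | i' | j'
        · exact hs ((hmem a).1 hx) ((hmem b).1 hy)
            (by simpa [Subtype.ext_iff] using hne) ((madj_ll G v k f a b).1 hadj)
        · simp [ht] at hy
        · exact madj_lrr G v k f a j' hadj
        · simp [ht] at hx
        · simp [ht] at hx
        · simp [ht] at hx
        · exact madj_lrr G v k f b j hadj.symm
        · simp [ht] at hy
        · exact madj_rrr G v k f j j' hadj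
      have hcardt : t.card = s.card + (k - 1) := by
        have h1 : (s.subtype (· ≠ v)).card = s.card := by
          rw [card_subtype, filter_true_of_mem]
          intro x hx hxv
          exact hv (hxv ▸ hx)
        simp [ht, card_disjSum, h1]
      exact hcardt ▸ card_le_indepNum _ htind

/-- the independence ratio exceeds 1/2 in G iff it does in a Meredith
extension of G (equivalently for the ≤ 1/2 statements). -/
theorem stmt5 {V : Type*} [Fintype V] [DecidableEq V] (G : SimpleGraph V)
    [DecidableRel G.Adj] (k : ℕ) (hk : 2 ≤ k) (hΔ : G.maxDegree = k) (v : V)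
    (f : V → Fin k) (hf : Set.InjOn f (G.neighborSet v)) :
    ((Fintype.card V < 2 * _root_.indepNum G ↔
      Fintype.card ({w : V // w ≠ v} ⊕ (Fin k ⊕ Fin (k - 1))) <
        2 * _root_.indepNum (meredith G v k f)) ∧
    (2 * _root_.indepNum G ≤ Fintype.card V ↔
      2 * _root_.indepNum (meredith G v k f) ≤
        Fintype.card ({w : V // w ≠ v} ⊕ (Fin k ⊕ Fin (k - 1))))) := by
  have hα := indepNum_meredith G k hk v f
  have hcard : Fintype.card ({w : V // w ≠ v} ⊕ (Fin k ⊕ Fin (k - 1))) =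
      (Fintype.card V - 1) + (k + (k - 1)) := by
    simp [Fintype.card_sum, Fintype.card_subtype_compl, Fintype.card_fin]
  have hV : 1 ≤ Fintype.card V := Fintype.card_pos_iff.2 ⟨v⟩
  rw [hα, hcard]
  omega
end

section
/- Let G be a simple graph with maximum degree k ≥ 2 and let I be an independent set of G containing a vertex v. If H is the Meredith extension of G applied on v, then H has an independent set of size |I| + k − 1. -/
open SimpleGraph Finset

/-- if I is independent in G and contains v, then the Meredith extension
applied on v has an independent set of size |I| + (k - 1). -/
theorem stmt6 {V : Type*} [Fintype V] [DecidableEq V] (G : SimpleGraph V)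
    [DecidableRel G.Adj] (k : ℕ) (hk : 2 ≤ k) (hΔ : G.maxDegree = k) (v : V)
    (f : V → Fin k) (hf : Set.InjOn f (G.neighborSet v))
    (I : Finset V) (hI : IsIndep G I) (hvI : v ∈ I) :
    ∃ J : Finset ({w : V // w ≠ v} ⊕ (Fin k ⊕ Fin (k - 1))),
      IsIndep (meredith G v k f) J ∧ J.card = I.card + (k - 1) := by
  classical
  set J1 : Finset ({w : V // w ≠ v} ⊕ (Fin k ⊕ Fin (k - 1))) :=
    (I.erase v).attach.image
      (fun w => Sum.inl (⟨w.1, Finset.ne_of_mem_erase w.2⟩ : {w : V // w ≠ v})) with hJ1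
  set J2 : Finset ({w : V // w ≠ v} ⊕ (Fin k ⊕ Fin (k - 1))) :=
    Finset.univ.image (fun i : Fin k => Sum.inr (Sum.inl i)) with hJ2
  have hmem1 : ∀ x, x ∈ J1 → ∃ w : V, ∃ h : w ≠ v, w ∈ I ∧ x = Sum.inl ⟨w, h⟩ := by
    intro x hx
    simp only [hJ1, Finset.mem_image, Finset.mem_attach, true_and] at hx
    obtain ⟨w, hw⟩ := hx
    exact ⟨w.1, Finset.ne_of_mem_erase w.2, Finset.mem_of_mem_erase w.2, hw.symm⟩
  have hmem2 : ∀ x, x ∈ J2 → ∃ i : Fin k, x = Sum.inr (Sum.inl i) := by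
    intro x hx
    simp only [hJ2, Finset.mem_image, Finset.mem_univ, true_and] at hx
    obtain ⟨i, hi⟩ := hx
    exact ⟨i, hi.symm⟩
  have hnadj : ∀ a b, a ∈ I → b ∈ I → a ≠ b → ¬ G.Adj a b := fun a b ha hb hab =>
    hI ha hb hab
  refine ⟨J1 ∪ J2, ?_, ?_⟩
  · intro x hx y hy hxy hadj
    rw [Finset.coe_union, Set.mem_union] at hx hy
    have hrel := ((SimpleGraph.fromRel_adj _ _ _).mp hadj).2
    rcases hx with hx | hx
    · obtain ⟨a, ha, haI, rfl⟩ := hmem1 x hx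
      rcases hy with hy | hy
      · obtain ⟨b, hb, hbI, rfl⟩ := hmem1 y hy
        have hab : a ≠ b := by
          intro h; subst h; exact hxy rfl
        rcases hrel with h | h <;> simp only at h
        · exact hnadj a b haI hbI hab h
        · exact hnadj b a hbI haI hab.symm h
      · obtain ⟨i, rfl⟩ := hmem2 y hy
        rcases hrel with h | h <;> simp only at h
        exact hnadj v a hvI haI (Ne.symm ha) h.1
    · obtain ⟨i, rfl⟩ := hmem2 x hx
      rcases hy with hy | hy
      · obtain ⟨b, hb, hbI, rfl⟩ := hmem1 y hy
        rcases hrel with h | h <;> simp only at h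
        exact hnadj v b hvI hbI (Ne.symm hb) h.1
      · obtain ⟨j, rfl⟩ := hmem2 y hy
        rcases hrel with h | h <;> simp only at h
  · have hdisj : Disjoint J1 J2 := by
      rw [Finset.disjoint_left]
      intro x hx1 hx2
      obtain ⟨a, ha, _, rfl⟩ := hmem1 x hx1
      obtain ⟨i, hi⟩ := hmem2 _ hx2
      exact Sum.inl_ne_inr hi
    rw [Finset.card_union_of_disjoint hdisj]
    have h1 : J1.card = (I.erase v).card := by
      rw [hJ1, Finset.card_image_of_injective _ ?_, Finset.card_attach]
      intro a b hab
      simp only [Sum.inl.injEq, Subtype.mk.injEq] at hab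
      exact Subtype.ext hab
    have h2 : J2.card = k := by
      rw [hJ2, Finset.card_image_of_injective _ ?_, Finset.card_univ, Fintype.card_fin]
      intro a b hab
      simpa using hab
    have hcI : 1 ≤ I.card := Finset.card_pos.mpr ⟨v, hvI⟩
    rw [h1, h2, Finset.card_erase_of_mem hvI]
    omega
end

section
/- Let G be a simple graph with maximum degree k ≥ 2 and let I be an independent set of G not containing a vertex v. If H is the Meredith extension of G applied on v, then I together with the k vertices of degree k in the attached K_{k,k−1} forms an independent set of H of size |I| + k. -/
open SimpleGraph Finset

/-- if I is independent in G and v ∉ I, then I together with the part of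
size k-1 of the attached K_{k,k-1} (the vertices of degree k in K_{k,k-1}) is an
independent set of the Meredith extension, of size |I| + (k - 1). -/
theorem stmt7 {V : Type*} [Fintype V] [DecidableEq V] (G : SimpleGraph V)
    [DecidableRel G.Adj] (k : ℕ) (hk : 2 ≤ k) (hΔ : G.maxDegree = k) (v : V)
    (f : V → Fin k) (hf : Set.InjOn f (G.neighborSet v))
    (I : Finset V) (hI : IsIndep G I) (hvI : v ∉ I) :
    IsIndep (meredith G v k f)
      ((I.subtype (· ≠ v)).map ⟨Sum.inl, Sum.inl_injective⟩ ∪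
        Finset.univ.map ((Function.Embedding.inr (α := Fin k) (β := Fin (k - 1))).trans
          (Function.Embedding.inr (α := {w : V // w ≠ v}) (β := Fin k ⊕ Fin (k - 1))))) ∧
    ((I.subtype (· ≠ v)).map ⟨Sum.inl, Sum.inl_injective⟩ ∪
        Finset.univ.map ((Function.Embedding.inr (α := Fin k) (β := Fin (k - 1))).trans
          (Function.Embedding.inr (α := {w : V // w ≠ v}) (β := Fin k ⊕ Fin (k - 1))))).card
      = I.card + (k - 1) := by
  constructor
  · intro x hx y hy hxy hadj
    simp only [Finset.coe_union, Set.mem_union, Finset.coe_map, Set.mem_image,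
      Finset.mem_coe, Finset.mem_subtype, Function.Embedding.coeFn_mk,
      Function.Embedding.trans_apply, Function.Embedding.inr_apply] at hx hy
    rw [meredith, SimpleGraph.fromRel_adj] at hadj
    obtain ⟨-, hrel⟩ := hadj
    rcases hx with ⟨a, ha, rfl⟩ | ⟨i, -, rfl⟩ <;>
      rcases hy with ⟨b, hb, rfl⟩ | ⟨j, -, rfl⟩
    · rcases hrel with h | h <;>
      · exact hI (Finset.mem_coe.mpr ha) (Finset.mem_coe.mpr hb)
          (fun e => hxy (congrArg Sum.inl (Subtype.ext e))) (by simpa [SimpleGraph.adj_comm] using h)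
    · simp at hrel
    · simp at hrel
    · simp at hrel
  · rw [Finset.card_union_of_disjoint, Finset.card_map, Finset.card_map,
      Finset.card_univ, Fintype.card_fin]
    · congr 1
      rw [Finset.card_subtype, Finset.filter_true_of_mem]
      intro x hx hxv
      exact hvI (hxv ▸ hx)
    · rw [Finset.disjoint_left]
      rintro x hx hy
      simp only [Finset.mem_map, Function.Embedding.trans_apply,
        Function.Embedding.inr_apply] at hx hy
      obtain ⟨a, -, rfl⟩ := hx
      obtain ⟨j, -, h⟩ := hy
      simp at h
end

section
/- Let G be a simple graph with maximum degree k ≥ 2, let H be the Meredith extension of G applied on v, and let I_H be a maximum independent set of H with |I_H| > |V(H)|/2. Then G has an independent set of size greater than |V(G)|/2. -/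
open SimpleGraph Finset

/-- if a maximum independent set of a Meredith extension covers more than
half of its vertices, then G has an independent set covering more than half of V(G). -/
theorem stmt8 {V : Type*} [Fintype V] [DecidableEq V] (G : SimpleGraph V)
    [DecidableRel G.Adj] (k : ℕ) (hk : 2 ≤ k) (hΔ : G.maxDegree = k) (v : V)
    (f : V → Fin k) (hf : Set.InjOn f (G.neighborSet v))
    (I : Finset ({w : V // w ≠ v} ⊕ (Fin k ⊕ Fin (k - 1))))
    (hI : IsIndep (meredith G v k f) I)
    (hmax : ∀ J, IsIndep (meredith G v k f) J → J.card ≤ I.card)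
    (hbig : Fintype.card ({w : V // w ≠ v} ⊕ (Fin k ⊕ Fin (k - 1))) < 2 * I.card) :
    ∃ s : Finset V, IsIndep G s ∧ Fintype.card V < 2 * s.card := by
  classical
  -- the independent set in G coming from the left part of I
  set s : Finset V := (I.filter fun x => x.isLeft).image (Sum.elim Subtype.val fun _ => v)
    with hs
  have hmem : ∀ a ∈ s, ∃ h : a ≠ v, Sum.inl ⟨a, h⟩ ∈ I := by
    intro a ha
    simp only [hs, mem_image, mem_filter] at ha
    obtain ⟨x, ⟨hxI, hxL⟩, hxa⟩ := ha
    cases x with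
    | inl w =>
      simp only [Sum.elim_inl] at hxa
      subst hxa
      exact ⟨w.2, hxI⟩
    | inr y => simp at hxL
  -- gadget pieces
  set A : Finset (Fin k) := Finset.univ.filter (fun i => Sum.inr (Sum.inl i) ∈ I) with hA
  set B : Finset (Fin (k-1)) := Finset.univ.filter (fun j => Sum.inr (Sum.inr j) ∈ I) with hB
  -- key counting: I injects into s ⊕ (A ⊕ B)
  have hcount : I.card ≤ s.card + (A.card + B.card) := by
    rw [← Finset.card_disjSum, ← Finset.card_disjSum]
    apply Finset.card_le_card_of_injOn (Sum.map Subtype.val id)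
    · intro x hx
      cases x with
      | inl w =>
        simp only [Sum.map_inl, Finset.mem_coe, Finset.inl_mem_disjSum]
        exact (Finset.mem_image (s := I.filter fun x => x.isLeft) (f := Sum.elim Subtype.val fun _ => v)).2 ⟨Sum.inl w, Finset.mem_filter.2 ⟨hx, rfl⟩, rfl⟩
      | inr y =>
        simp only [Sum.map_inr, id, Finset.mem_coe, Finset.inr_mem_disjSum]
        cases y with
        | inl i => simpa [hA, Finset.inl_mem_disjSum] using hx
        | inr j => simpa [hB, Finset.inr_mem_disjSum] using hx
    · intro x _ y _ hxy
      cases x <;> cases y <;> simp_all [Sum.map, Subtype.ext_iff]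
  -- s is independent in G
  have hsind : IsIndep G s := by
    intro a ha b hb hab
    obtain ⟨hav, haI⟩ := hmem a ha
    obtain ⟨hbv, hbI⟩ := hmem b hb
    have hne : (Sum.inl ⟨a, hav⟩ : {w : V // w ≠ v} ⊕ (Fin k ⊕ Fin (k-1))) ≠ Sum.inl ⟨b, hbv⟩ := by
      simp [Subtype.ext_iff, hab]
    have := hI haI hbI hne
    simp only [meredith, SimpleGraph.fromRel_adj] at this
    intro hadj
    exact this ⟨hne, Or.inl hadj⟩
  -- v is not in s
  have hvs : v ∉ s := fun hv => (hmem v hv).choose rfl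
  -- cardinal computation of the big vertex set
  have hcardW : Fintype.card ({w : V // w ≠ v} ⊕ (Fin k ⊕ Fin (k - 1)))
      = (Fintype.card V - 1) + (k + (k-1)) := by
    simp [Fintype.card_subtype_compl, Fintype.card_subtype_eq]
  have hVpos : 1 ≤ Fintype.card V := Fintype.card_pos_iff.2 ⟨v⟩
  rw [hcardW] at hbig
  -- A and B cannot both be nonempty
  have hABne : A.Nonempty → B.Nonempty → False := by
    rintro ⟨i, hi⟩ ⟨j, hj⟩
    rw [hA, Finset.mem_filter] at hi
    rw [hB, Finset.mem_filter] at hj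
    have hne : (Sum.inr (Sum.inl i) : {w : V // w ≠ v} ⊕ (Fin k ⊕ Fin (k-1)))
        ≠ Sum.inr (Sum.inr j) := by simp
    exact (hI hi.2 hj.2 hne) (by simp [meredith, SimpleGraph.fromRel_adj])
  by_cases hAu : A = Finset.univ
  · -- all of Fin k is in I : then no neighbor of v is in s, and we can add v
    have hBe : B = ∅ := by
      rcases Finset.eq_empty_or_nonempty B with h | h
      · exact h
      · exact absurd (hABne ⟨⟨0, by omega⟩, hAu ▸ Finset.mem_univ _⟩ h) not_false
    have hAk : A.card = k := by simp [hAu]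
    have hnov : ∀ a ∈ s, ¬ G.Adj v a := by
      intro a ha hadj
      obtain ⟨hav, haI⟩ := hmem a ha
      have huI : Sum.inr (Sum.inl (f a)) ∈ I := by
        have := hAu ▸ Finset.mem_univ (f a)
        rw [hA, Finset.mem_filter] at this
        exact this.2
      have hne : (Sum.inl ⟨a, hav⟩ : {w : V // w ≠ v} ⊕ (Fin k ⊕ Fin (k-1)))
          ≠ Sum.inr (Sum.inl (f a)) := by simp
      exact (hI haI huI hne) (by simp [meredith, SimpleGraph.fromRel_adj, hadj])
    refine ⟨insert v s, ?_, ?_⟩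
    · intro a ha b hb hab
      simp only [Finset.coe_insert, Set.mem_insert_iff, Finset.mem_coe] at ha hb
      rcases ha with rfl | ha
      · rcases hb with rfl | hb
        · exact absurd rfl hab
        · exact hnov b hb
      · rcases hb with rfl | hb
        · exact fun h => hnov a ha h.symm
        · exact hsind ha hb hab
    · rw [Finset.card_insert_of_notMem hvs]
      rw [hAk, hBe] at hcount
      simp only [Finset.card_empty] at hcount
      omega
  · -- A is missing some vertex, so A.card + B.card ≤ k - 1 and s itself works
    have hABle : A.card + B.card ≤ k - 1 := by
      rcases Finset.eq_empty_or_nonempty B with h | h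
      · have : A.card < k := by
          have := Finset.card_lt_card (Finset.ssubset_univ_iff.2 hAu)
          simpa using this
        simp [h]; omega
      · have hAe : A = ∅ := by
          rcases Finset.eq_empty_or_nonempty A with h' | h'
          · exact h'
          · exact absurd (hABne h' h) not_false
        have : B.card ≤ k - 1 := by
          simpa using Finset.card_le_card (Finset.subset_univ B)
        simp [hAe]; omega
    exact ⟨s, hsind, by omega⟩
end

section
/- Let k ≥ 2, t ≥ 0, and set φ(k,t) = t(k−1)² + (k−1). Let G be a graph and I an independent set of G with Y = V(G) \ I. Suppose: (i) every vertex of G has degree k or k−1; (ii) |I ∩ V_{k−1}(G)| ≤ |Y| / φ(k,t); (iii) the subgraph induced on Y contains at least one edge. Then |I| < (k + 1/φ(k,t)) / (2k + 1/φ(k,t)) · |V(G)|, and consequently |I|/|V(G)| < 1/2 + 1/(4k·φ(k,t) + 2). -/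
open SimpleGraph Finset

/-- the counting argument bounding |I|. -/
theorem stmt10 {V : Type*} [Fintype V] [DecidableEq V] (G : SimpleGraph V)
    [DecidableRel G.Adj] (k t : ℕ) (hk : 2 ≤ k)
    (I : Finset V) (hI : IsIndep G I) (Y : Finset V) (hY : Y = Finset.univ \ I)
    (hdeg : ∀ v : V, G.degree v = k ∨ G.degree v = k - 1)
    (φ : ℝ) (hφ : φ = (t : ℝ) * ((k : ℝ) - 1) ^ 2 + ((k : ℝ) - 1))
    (hIk1 : (((I.filter fun v => G.degree v = k - 1).card : ℝ)) ≤ (Y.card : ℝ) / φ)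
    (hedge : ∃ a ∈ Y, ∃ b ∈ Y, G.Adj a b) :
    (I.card : ℝ) < (((k : ℝ) + 1 / φ) / (2 * (k : ℝ) + 1 / φ)) * (Fintype.card V : ℝ) ∧
    (I.card : ℝ) / (Fintype.card V : ℝ) < 1 / 2 + 1 / (4 * (k : ℝ) * φ + 2) := by
  classical
  have h2 : (2:ℝ) ≤ (k:ℝ) := by exact_mod_cast hk
  have ht0 : (0:ℝ) ≤ (t:ℝ) := Nat.cast_nonneg t
  have hφpos : (0:ℝ) < φ := by
    rw [hφ]; nlinarith [sq_nonneg ((k:ℝ) - 1)]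
  -- disjointness and union
  have hIY : Disjoint I Y := by rw [hY]; exact Finset.disjoint_sdiff
  have hIuY : I ∪ Y = Finset.univ := by
    rw [hY]; exact Finset.union_sdiff_of_subset (Finset.subset_univ I)
  -- degrees of vertices in I count only neighbors in Y
  have hdegI : ∀ v ∈ I, G.degree v = (Y.filter (G.Adj v)).card := by
    intro v hv
    rw [← SimpleGraph.card_neighborFinset_eq_degree, SimpleGraph.neighborFinset_eq_filter]
    congr 1
    ext y
    simp only [Finset.mem_filter, Finset.mem_univ, true_and, hY, Finset.mem_sdiff]
    constructor
    · intro hadj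
      exact ⟨fun hyI => hI hv hyI hadj.ne hadj, hadj⟩
    · exact fun h => h.2
  -- degrees of vertices in Y split
  have hdegY : ∀ y ∈ Y, G.degree y = (I.filter (G.Adj y)).card + (Y.filter (G.Adj y)).card := by
    intro y _
    rw [← SimpleGraph.card_neighborFinset_eq_degree, SimpleGraph.neighborFinset_eq_filter]
    rw [← Finset.card_union_of_disjoint (Finset.disjoint_filter_filter hIY),
      ← Finset.filter_union, hIuY]
  -- double counting
  have hswap : ∑ v ∈ I, (Y.filter (G.Adj v)).card = ∑ y ∈ Y, (I.filter (G.Adj y)).card := by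
    simp only [Finset.card_filter]
    rw [Finset.sum_comm]
    exact Finset.sum_congr rfl fun y _ => Finset.sum_congr rfl fun v _ => by
      simp only [G.adj_comm v y]
  -- at least one edge within Y
  have hYedge : 2 ≤ ∑ y ∈ Y, (Y.filter (G.Adj y)).card := by
    obtain ⟨a, ha, b, hb, hab⟩ := hedge
    have hsub : ({a, b} : Finset V) ⊆ Y := by
      intro x hx
      rcases Finset.mem_insert.mp hx with h | h
      · exact h ▸ ha
      · exact (Finset.mem_singleton.mp h) ▸ hb
    calc (2:ℕ) ≤ ∑ y ∈ ({a, b} : Finset V), (Y.filter (G.Adj y)).card := by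
          rw [Finset.sum_pair hab.ne]
          have h1 : 0 < (Y.filter (G.Adj a)).card :=
            Finset.card_pos.mpr ⟨b, Finset.mem_filter.mpr ⟨hb, hab⟩⟩
          have h2 : 0 < (Y.filter (G.Adj b)).card :=
            Finset.card_pos.mpr ⟨a, Finset.mem_filter.mpr ⟨ha, hab.symm⟩⟩
          omega
      _ ≤ ∑ y ∈ Y, (Y.filter (G.Adj y)).card :=
          Finset.sum_le_sum_of_subset hsub
  -- main counting inequality in ℕ
  have hsumI : ∑ v ∈ I, G.degree v + 2 ≤ ∑ y ∈ Y, G.degree y := by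
    rw [Finset.sum_congr rfl hdegI, Finset.sum_congr rfl hdegY, hswap,
      Finset.sum_add_distrib]
    omega
  set m := (I.filter fun v => G.degree v = k - 1).card with hm
  have hlowI : k * I.card ≤ ∑ v ∈ I, G.degree v + m := by
    have : ∑ v ∈ I, k ≤ ∑ v ∈ I, (G.degree v + if G.degree v = k - 1 then 1 else 0) := by
      refine Finset.sum_le_sum fun v _ => ?_
      rcases hdeg v with h | h <;> rw [h] <;> split <;> omega
    rw [Finset.sum_const, smul_eq_mul, Finset.sum_add_distrib, ← Finset.card_filter,
      ← hm] at this
    rwa [mul_comm] at this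
  have hupY : ∑ y ∈ Y, G.degree y ≤ k * Y.card := by
    calc ∑ y ∈ Y, G.degree y ≤ ∑ y ∈ Y, k :=
        Finset.sum_le_sum fun y _ => by rcases hdeg y with h | h <;> omega
      _ = k * Y.card := by rw [Finset.sum_const, smul_eq_mul, mul_comm]
  have hkey : k * I.card + 2 ≤ k * Y.card + m := by omega
  -- cardinalities
  have hcard : I.card + Y.card = Fintype.card V := by
    rw [← Finset.card_union_of_disjoint hIY, hIuY, Finset.card_univ]
  -- cast to ℝ
  have hkeyR : (k:ℝ) * I.card + 2 ≤ (k:ℝ) * Y.card + (Y.card : ℝ) / φ := by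
    have := hkey
    have h1 : (k:ℝ) * I.card + 2 ≤ (k:ℝ) * Y.card + (m:ℝ) := by exact_mod_cast hkey
    calc (k:ℝ) * I.card + 2 ≤ (k:ℝ) * Y.card + (m:ℝ) := h1
      _ ≤ (k:ℝ) * Y.card + (Y.card : ℝ) / φ := by
          linarith [hIk1]
  have hcardR : (I.card : ℝ) + (Y.card : ℝ) = (Fintype.card V : ℝ) := by
    exact_mod_cast hcard
  have hD : (0:ℝ) < 2 * (k:ℝ) + 1 / φ := by positivity
  have hmain : (I.card : ℝ) * (2 * (k:ℝ) + 1 / φ) < ((k:ℝ) + 1 / φ) * (Fintype.card V : ℝ) := by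
    have hYφ : (Y.card : ℝ) / φ = (1 / φ) * (Y.card : ℝ) := by ring
    rw [hYφ] at hkeyR
    nlinarith [hcardR]
  have hfirst : (I.card : ℝ) < (((k : ℝ) + 1 / φ) / (2 * (k : ℝ) + 1 / φ)) * (Fintype.card V : ℝ) := by
    rw [div_mul_eq_mul_div, lt_div_iff₀ hD]
    linarith [hmain]
  refine ⟨hfirst, ?_⟩
  have hnpos : (0:ℝ) < (Fintype.card V : ℝ) := by
    obtain ⟨a, ha, _⟩ := hedge
    have : 0 < Fintype.card V := Fintype.card_pos_iff.mpr ⟨a⟩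
    exact_mod_cast this
  have heq : ((k : ℝ) + 1 / φ) / (2 * (k : ℝ) + 1 / φ) = 1 / 2 + 1 / (4 * (k:ℝ) * φ + 2) := by
    have h4 : (0:ℝ) < 4 * (k:ℝ) * φ + 2 := by positivity
    field_simp
    ring
  rw [div_lt_iff₀ hnpos]
  rw [← heq]
  linarith [hfirst]
end

section
/- Let k ≥ 3, t ≥ 0, and φ(k,t) = t(k−1)² + (k−1). Suppose G is a k-critical graph with minimum degree at least k−1 such that every vertex v of degree k−1 is the initial vertex of k−1 paths p₁(v),...,p_{k−1}(v) satisfying: each path meets V_{k−1}(G) only in v, each path has at least 2t(k−1)+2 vertices, distinct paths from v meet only in v, and paths from distinct degree-(k−1) vertices are disjoint. Then every independent set I of G satisfies |I ∩ V_{k−1}(G)| · φ(k,t) ≤ |V(G) \ I|. -/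
open SimpleGraph Finset

lemma list_aux {α : Type*} (p : α → Bool) : ∀ n (l : List α), l.length ≤ n →
    List.Chain' (fun a b => p a = true ∨ p b = true) l →
    l.length ≤ 2 * (l.filter p).length + 1 := by
  intro n
  induction n with
  | zero => intro l hl _; omega
  | succ n ih =>
    intro l hl hc
    match l with
    | [] => simp
    | [a] => simp
    | a :: b :: rest =>
      obtain ⟨h1, hc'⟩ := List.isChain_cons_cons.mp hc
      by_cases ha : p a = true
      · have := ih (b :: rest) (by simp at hl ⊢; omega) hc'
        simp [List.filter_cons, ha] at this ⊢; omega
      · have hb : p b = true := by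
          rcases h1 with h | h
          · exact absurd h ha
          · exact h
        have := ih rest (by simp at hl ⊢; omega) hc'.tail
        simp [List.filter_cons, ha, hb] at this ⊢; omega

lemma filter_toFinset_card {α : Type*} [DecidableEq α] (l : List α) (hl : l.Nodup)
    (p : α → Prop) [DecidablePred p] :
    (l.toFinset.filter p).card = (l.filter (fun x => decide (p x))).length := by
  have h : l.toFinset.filter p = (l.filter (fun x => decide (p x))).toFinset := by
    ext x; simp [List.mem_filter]
  rw [h, List.toFinset_card_of_nodup (hl.filter _)]

/-- in a graph of C(k,t), every independent set I satisfies
|I ∩ V_{k-1}(G)| · φ(k,t) ≤ |V(G) \ I|. -/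
theorem stmt12 {V : Type*} [Fintype V] [DecidableEq V] (G : SimpleGraph V)
    [DecidableRel G.Adj] (k t : ℕ) (hk : 3 ≤ k)
    (hG : IsKCritical G k) (hδ : k - 1 ≤ G.minDegree)
    (w : V → Fin (k - 1) → V) (P : ∀ v i, G.Walk v (w v i))
    (hpath : ∀ v, G.degree v = k - 1 → ∀ i, (P v i).IsPath)
    (hmeet : ∀ v, G.degree v = k - 1 → ∀ i, ∀ x ∈ (P v i).support,
      G.degree x = k - 1 → x = v)
    (hlen : ∀ v, G.degree v = k - 1 → ∀ i, 2 * t * (k - 1) + 2 ≤ (P v i).support.length)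
    (hdisj : ∀ v, G.degree v = k - 1 → ∀ i j, i ≠ j →
      ∀ x ∈ (P v i).support, x ∈ (P v j).support → x = v)
    (hdisj2 : ∀ v v', G.degree v = k - 1 → G.degree v' = k - 1 → v ≠ v' →
      ∀ i j, ∀ x ∈ (P v i).support, x ∉ (P v' j).support)
    (I : Finset V) (hI : IsIndep G I) :
    (I.filter fun v => G.degree v = k - 1).card * (t * (k - 1) ^ 2 + (k - 1)) ≤
      (Finset.univ \ I).card := by
  classical
  set A := I.filter fun v => G.degree v = k - 1 with hA
  set S : V → Fin (k - 1) → Finset V :=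
    fun v i => (P v i).support.toFinset.filter (fun x => x ∉ I) with hS
  -- each S v i has at least t*(k-1)+1 elements
  have hcard : ∀ v ∈ A, ∀ i, t * (k - 1) + 1 ≤ (S v i).card := by
    intro v hv i
    have hdeg : G.degree v = k - 1 := (Finset.mem_filter.mp hv).2
    have hnodup : (P v i).support.Nodup := ((hpath v hdeg i).support_nodup)
    have hchain : List.Chain' (fun a b => (decide (a ∉ I)) = true ∨ (decide (b ∉ I)) = true)
        (P v i).support := by
      refine List.IsChain.imp ?_ ((P v i).isChain_adj_support)
      intro a b hab
      by_contra h
      push_neg at h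
      obtain ⟨h1, h2⟩ := h
      have ha' : a ∈ I := by simpa using h1
      have hb' : b ∈ I := by simpa using h2
      exact hI ha' hb' (G.ne_of_adj hab) hab
    have hlist := list_aux (fun x => decide (x ∉ I)) (P v i).support.length
      (P v i).support le_rfl hchain
    have hlen' := hlen v hdeg i
    have hScard : (S v i).card =
        ((P v i).support.filter (fun x => decide (x ∉ I))).length :=
      filter_toFinset_card _ hnodup _
    have h2t : 2 * t * (k - 1) = 2 * (t * (k - 1)) := by ring
    omega
  set B := A ×ˢ (Finset.univ : Finset (Fin (k - 1))) with hB
  have hdisjB : ∀ p ∈ B, ∀ q ∈ B, p ≠ q → Disjoint (S p.1 p.2) (S q.1 q.2) := by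
    rintro ⟨v, i⟩ hp ⟨v', j⟩ hq hne
    have hv := (Finset.mem_product.mp hp).1
    have hv' := (Finset.mem_product.mp hq).1
    have hdv : G.degree v = k - 1 := (Finset.mem_filter.mp hv).2
    have hdv' : G.degree v' = k - 1 := (Finset.mem_filter.mp hv').2
    rw [Finset.disjoint_left]
    intro x hx hx'
    have hxs : x ∈ (P v i).support := by
      have := (Finset.mem_filter.mp hx).1; simpa using this
    have hxs' : x ∈ (P v' j).support := by
      have := (Finset.mem_filter.mp hx').1; simpa using this
    have hxI : x ∉ I := (Finset.mem_filter.mp hx).2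
    by_cases hvv : v = v'
    · subst hvv
      have hij : i ≠ j := by
        intro h; exact hne (by rw [h])
      have hxv := hdisj v hdv i j hij x hxs hxs'
      rw [hxv] at hxI
      exact hxI (Finset.mem_filter.mp hv).1
    · exact hdisj2 v v' hdv hdv' hvv i j x hxs hxs'
  have hsub : B.biUnion (fun p => S p.1 p.2) ⊆ Finset.univ \ I := by
    intro x hx
    obtain ⟨p, _, hxp⟩ := Finset.mem_biUnion.mp hx
    have : x ∉ I := (Finset.mem_filter.mp hxp).2
    simp [this]
  have hsum : B.card * (t * (k - 1) + 1) ≤ (B.biUnion (fun p => S p.1 p.2)).card := by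
    rw [Finset.card_biUnion hdisjB]
    calc B.card * (t * (k - 1) + 1) = ∑ _p ∈ B, (t * (k - 1) + 1) := by
          rw [Finset.sum_const, smul_eq_mul]
      _ ≤ ∑ p ∈ B, (S p.1 p.2).card := by
          refine Finset.sum_le_sum ?_
          rintro ⟨v, i⟩ hp
          exact hcard v (Finset.mem_product.mp hp).1 i
  have hBcard : B.card = A.card * (k - 1) := by
    rw [hB, Finset.card_product, Finset.card_univ, Fintype.card_fin]
  have hfin := le_trans hsum (Finset.card_le_card hsub)
  calc A.card * (t * (k - 1) ^ 2 + (k - 1)) = A.card * (k - 1) * (t * (k - 1) + 1) := by ring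
    _ = B.card * (t * (k - 1) + 1) := by rw [hBcard]
    _ ≤ (Finset.univ \ I).card := hfin
end

section
/- Let k ≥ 3, t ≥ 0, and φ(k,t) = t(k−1)² + (k−1). If G ∈ C(k,t), then α(G)/|V(G)| < 1/2 + 1/(4k·φ(k,t) + 2). -/
open SimpleGraph Finset

/-- Membership in the class `C(k,t)` of the paper. -/
def CKT {V : Type*} [Fintype V] [DecidableEq V] (G : SimpleGraph V)
    [DecidableRel G.Adj] (k t : ℕ) : Prop :=
  IsKCritical G k ∧ k - 1 ≤ G.minDegree ∧
    ∃ (w : V → Fin (k - 1) → V) (P : ∀ v i, G.Walk v (w v i)),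
      ∀ v, G.degree v = k - 1 → ∀ i,
        (P v i).IsPath ∧
        (∀ x ∈ (P v i).support, G.degree x = k - 1 → x = v) ∧
        2 * t * (k - 1) + 2 ≤ (P v i).support.length ∧
        (∀ j, i ≠ j → ∀ x ∈ (P v i).support, x ∈ (P v j).support → x = v) ∧
        (∀ v', G.degree v' = k - 1 → v' ≠ v → ∀ j, ∀ x ∈ (P v i).support,
          x ∉ (P v' j).support)
section Aux1
variable {V : Type*} [Fintype V] [DecidableEq V]

omit [DecidableEq V] in
lemma coloring_set_nonempty (G : SimpleGraph V) :
    {n | ∃ c : Sym2 V → Fin n, IsProperEdgeColoring G n c}.Nonempty := by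
  classical
  refine ⟨Fintype.card (Sym2 V), Fintype.equivFin (Sym2 V), ?_⟩
  intro e₁ _ e₂ _ hne _ hEq
  exact hne ((Fintype.equivFin (Sym2 V)).injective hEq)

omit [Fintype V] [DecidableEq V] in
lemma chromIndex_le {G : SimpleGraph V} {n : ℕ} (c : Sym2 V → Fin n)
    (hc : IsProperEdgeColoring G n c) : chromIndex G ≤ n :=
  Nat.sInf_le ⟨c, hc⟩

omit [DecidableEq V] in
lemma exists_coloring {G : SimpleGraph V} {n : ℕ} (h : chromIndex G = n) :
    ∃ c : Sym2 V → Fin n, IsProperEdgeColoring G n c := by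
  have h2 : chromIndex G ∈ {n | ∃ c : Sym2 V → Fin n, IsProperEdgeColoring G n c} :=
    Nat.sInf_mem (coloring_set_nonempty G)
  rwa [h] at h2

omit [Fintype V] [DecidableEq V] in
lemma exists_edge {G : SimpleGraph V} {k : ℕ} (hk : 1 ≤ k)
    (hchrom : chromIndex G = k + 1) : ∃ e, e ∈ G.edgeSet := by
  by_contra h
  push_neg at h
  have hle : chromIndex G ≤ 1 :=
    chromIndex_le (fun _ => (0 : Fin 1)) (fun e₁ he₁ => absurd he₁ (h e₁))
  omega

omit [Fintype V] [DecidableEq V] in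
lemma alt_path_inv {K Hh G : SimpleGraph V} {k : ℕ} {c : Sym2 V → Fin k} {a b : Fin k}
    {I : Finset V} {v₀ : V}
    (hKadj : ∀ x y : V, K.Adj x y ↔ Hh.Adj x y ∧ (c s(x, y) = a ∨ c s(x, y) = b))
    (hKG : ∀ {x y : V}, K.Adj x y → G.Adj x y)
    (hc : IsProperEdgeColoring Hh k c)
    (hab : a ≠ b)
    (bip : ∀ x y, G.Adj x y → ((x ∈ I) ↔ (y ∈ I)) → False)
    (hbV' : ∀ w, Hh.Adj v₀ w → c s(v₀, w) ≠ b) :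
    ∀ (y ww : V) (q : K.Walk y ww) (x : V) (h : K.Adj x y), ww = v₀ →
      (SimpleGraph.Walk.cons h q).IsPath → (((x ∈ I) ↔ (v₀ ∈ I)) ↔ c s(x, y) = b) := by
  intro y ww q
  induction q with
  | nil =>
    intro x h hEq _
    subst hEq
    refine iff_of_false (bip _ _ (hKG h)) (fun hEq2 => ?_)
    apply hbV' x ((hKadj _ _).mp h).1.symm
    rwa [Sym2.eq_swap]
  | @cons yy zz ww h' q' ih =>
    intro x h hEq hp
    subst hEq
    have hp' := hp.of_cons
    have ihy := ih yy h' rfl hp'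
    have hxzz : x ≠ zz := by
      intro hEq2
      have hnotmem : x ∉ (SimpleGraph.Walk.cons h' q').support :=
        ((SimpleGraph.Walk.cons_isPath_iff h _).mp hp).2
      apply hnotmem
      rw [SimpleGraph.Walk.support_cons, hEq2]
      exact List.mem_cons_of_mem _ q'.start_mem_support
    have hEdgeNe : s(x, yy) ≠ s(yy, zz) := by
      intro hEq2
      rcases Sym2.eq_iff.mp hEq2 with ⟨h3, h4⟩ | ⟨h3, h4⟩
      · exact (hKG h).ne h3
      · exact hxzz h3
    have hxyH : Hh.Adj x yy := ((hKadj _ _).mp h).1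
    have hyzH : Hh.Adj yy zz := ((hKadj _ _).mp h').1
    have hcol_ne : c s(x, yy) ≠ c s(yy, zz) :=
      hc _ ((Hh.mem_edgeSet).mpr hxyH) _ ((Hh.mem_edgeSet).mpr hyzH) hEdgeNe
        ⟨yy, by simp, by simp⟩
    have hxyab := ((hKadj _ _).mp h).2
    have hyzab := ((hKadj _ _).mp h').2
    have hbipxy : ¬((x ∈ I) ↔ (yy ∈ I)) := bip x yy (hKG h)
    have hkey : (c s(x, yy) = b) ↔ ¬(c s(yy, zz) = b) := by
      rcases hxyab with h3 | h3 <;> rcases hyzab with h4 | h4 <;>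
        simp [h3, h4, hab, Ne.symm hab] at hcol_ne ⊢
    tauto

lemma kempe {G : SimpleGraph V} [DecidableRel G.Adj] {k : ℕ} (hk : 1 ≤ k)
    (hdeg : ∀ v, G.degree v ≤ k)
    (hcrit : ∀ e ∈ G.edgeSet, chromIndex (G.deleteEdges {e}) = k)
    (hchrom : chromIndex G = k + 1)
    (I : Finset V)
    (bip : ∀ x y, G.Adj x y → ((x ∈ I) ↔ (y ∈ I)) → False) : False := by
  classical
  obtain ⟨u₀, v₀, he₀⟩ := Sym2.exists.mp (exists_edge hk hchrom)
  have hadj : G.Adj u₀ v₀ := (G.mem_edgeSet).mp he₀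
  obtain ⟨c, hc₀⟩ := exists_coloring (hcrit _ he₀)
  obtain ⟨H, hHadj, hHset, hc⟩ :
      ∃ H : SimpleGraph V,
        (∀ x y : V, H.Adj x y ↔ G.Adj x y ∧ s(x, y) ≠ s(u₀, v₀)) ∧
        H.edgeSet = G.edgeSet \ {s(u₀, v₀)} ∧
        IsProperEdgeColoring H k c := by
    refine ⟨G.deleteEdges {s(u₀, v₀)}, fun x y => ?_, edgeSet_deleteEdges _, hc₀⟩
    rw [deleteEdges_adj]
    simp
  have hHG : ∀ {x y : V}, H.Adj x y → G.Adj x y := fun h => ((hHadj _ _).mp h).1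
  have hHmem : ∀ {e : Sym2 V}, e ∈ G.edgeSet → e ≠ s(u₀, v₀) → e ∈ H.edgeSet := by
    intro e he hne
    rw [hHset]
    exact ⟨he, by simpa using hne⟩
  -- missing colors
  have missing : ∀ x z : V, G.Adj x z →
      ∃ a : Fin k, ∀ w, G.Adj x w → w ≠ z → c s(x, w) ≠ a := by
    intro x z hxz
    have hTcard : (((G.neighborFinset x).erase z).image (fun w => c s(x, w))).card < k := by
      have h1 := Finset.card_image_le (s := (G.neighborFinset x).erase z)
        (f := fun w => c s(x, w))
      have h2 : ((G.neighborFinset x).erase z).card = G.degree x - 1 := by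
        rw [Finset.card_erase_of_mem ((G.mem_neighborFinset x z).mpr hxz)]
        rfl
      have h3 := hdeg x
      have h4 : 1 ≤ G.degree x := by
        rw [← G.card_neighborFinset_eq_degree]
        exact Finset.card_pos.mpr ⟨z, (G.mem_neighborFinset x z).mpr hxz⟩
      omega
    have hne : (univ \ (((G.neighborFinset x).erase z).image (fun w => c s(x, w)))).Nonempty := by
      rw [← Finset.card_pos, Finset.card_sdiff_of_subset (Finset.subset_univ _), Finset.card_fin]
      omega
    obtain ⟨a, ha⟩ := hne
    rw [Finset.mem_sdiff] at ha
    refine ⟨a, fun w hw hwz hEq => ha.2 ?_⟩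
    exact Finset.mem_image.mpr ⟨w, Finset.mem_erase.mpr
      ⟨hwz, (G.mem_neighborFinset x w).mpr hw⟩, hEq⟩
  obtain ⟨a, haU⟩ := missing u₀ v₀ hadj
  obtain ⟨b, hbV⟩ := missing v₀ u₀ hadj.symm
  have haU' : ∀ w, H.Adj u₀ w → c s(u₀, w) ≠ a := by
    intro w hw
    have h2 := (hHadj _ _).mp hw
    refine haU w h2.1 (fun hEq => h2.2 ?_)
    rw [hEq]
  have hbV' : ∀ w, H.Adj v₀ w → c s(v₀, w) ≠ b := by
    intro w hw
    have h2 := (hHadj _ _).mp hw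
    refine hbV w h2.1 (fun hEq => h2.2 ?_)
    rw [hEq, Sym2.eq_swap]
  by_cases hab : a = b
  · -- easy case: the same color is missing at both ends
    subst hab
    have notA : ∀ e ∈ G.edgeSet, e ≠ s(u₀, v₀) → (∃ x, x ∈ e ∧ x ∈ s(u₀, v₀)) →
        c e ≠ a := by
      rintro e he hne ⟨x, hxe, hxe₀⟩
      have heH : e ∈ H.edgeSet := hHmem he hne
      rcases Sym2.mem_iff.mp hxe₀ with rfl | rfl
      · obtain ⟨w, rfl⟩ := Sym2.mem_iff_exists.mp hxe
        exact haU' w ((H.mem_edgeSet).mp heH)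
      · obtain ⟨w, rfl⟩ := Sym2.mem_iff_exists.mp hxe
        exact hbV' w ((H.mem_edgeSet).mp heH)
    have hproper : IsProperEdgeColoring G k
        (fun e => if e = s(u₀, v₀) then a else c e) := by
      intro e₁ he₁ e₂ he₂ hne hsh
      obtain ⟨x, hx1, hx2⟩ := hsh
      show (if e₁ = s(u₀, v₀) then a else c e₁) ≠ (if e₂ = s(u₀, v₀) then a else c e₂)
      by_cases h1 : e₁ = s(u₀, v₀) <;> by_cases h2 : e₂ = s(u₀, v₀)
      · exact absurd (h1.trans h2.symm) hne
      · rw [if_pos h1, if_neg h2]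
        exact fun hEq => notA e₂ he₂ h2 ⟨x, hx2, h1 ▸ hx1⟩ hEq.symm
      · rw [if_neg h1, if_pos h2]
        exact fun hEq => notA e₁ he₁ h1 ⟨x, hx1, h2 ▸ hx2⟩ hEq
      · rw [if_neg h1, if_neg h2]
        exact hc e₁ (hHmem he₁ h1) e₂ (hHmem he₂ h2) hne ⟨x, hx1, hx2⟩
    have := chromIndex_le _ hproper
    omega
  · -- Kempe chain case
    obtain ⟨K, hKadj⟩ :
        ∃ K : SimpleGraph V,
          ∀ x y : V, K.Adj x y ↔ H.Adj x y ∧ (c s(x, y) = a ∨ c s(x, y) = b) :=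
      ⟨{ Adj := fun x y => H.Adj x y ∧ (c s(x, y) = a ∨ c s(x, y) = b)
         symm := by
           constructor
           intro x y hxy
           refine ⟨hxy.1.symm, ?_⟩
           rw [Sym2.eq_swap]
           exact hxy.2
         loopless := ⟨fun x hx => H.loopless.irrefl x hx.1⟩ }, fun x y => Iff.rfl⟩
    have hKG : ∀ {x y : V}, K.Adj x y → G.Adj x y := fun h => hHG ((hKadj _ _).mp h).1
    have INV := alt_path_inv hKadj (fun {x y} h => hKG h) hc hab bip hbV'
    -- v₀ is not reachable from u₀ in the Kempe graph
    have notR : ¬ K.Reachable u₀ v₀ := by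
      intro hR
      obtain ⟨p0⟩ := hR
      obtain ⟨q, hq⟩ := p0.toPath
      cases q with
      | nil => exact G.loopless.irrefl u₀ hadj
      | @cons _ y _ h q' =>
        have hinv := INV y v₀ q' u₀ h rfl hq
        have hb2 : c s(u₀, y) = b :=
          (((hKadj _ _).mp h).2).resolve_left (haU' y ((hKadj _ _).mp h).1)
        exact bip u₀ v₀ hadj (hinv.mpr hb2)
    -- color swap
    obtain ⟨sw, sw_ab, sw_ba, sw_other⟩ :
        ∃ sw : Fin k → Fin k, sw a = b ∧ sw b = a ∧ ∀ z, z ≠ a → z ≠ b → sw z = z := by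
      refine ⟨fun z => if z = a then b else if z = b then a else z, ?_, ?_, ?_⟩
      · show (if a = a then b else if a = b then a else a) = b
        rw [if_pos rfl]
      · show (if b = a then b else if b = b then a else b) = a
        rw [if_neg (Ne.symm hab), if_pos rfl]
      · intro z h1 h2
        show (if z = a then b else if z = b then a else z) = z
        rw [if_neg h1, if_neg h2]
    have sw_invol : ∀ z, sw (sw z) = z := by
      intro z
      by_cases h1 : z = a
      · rw [h1, sw_ab, sw_ba]
      · by_cases h2 : z = b
        · rw [h2, sw_ba, sw_ab]
        · rw [sw_other z h1 h2, sw_other z h1 h2]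
    have sw_inj : Function.Injective sw := Function.Involutive.injective sw_invol
    have sw_mem : ∀ z, (z = a ∨ z = b) → (sw z = a ∨ sw z = b) := by
      rintro z (rfl | rfl)
      · rw [sw_ab]; exact Or.inr rfl
      · rw [sw_ba]; exact Or.inl rfl
    -- reachability spreads to both endpoints of a Kempe edge
    have BOTH : ∀ e : Sym2 V, e ∈ H.edgeSet → (c e = a ∨ c e = b) →
        (∃ x ∈ e, K.Reachable u₀ x) → ∀ z ∈ e, K.Reachable u₀ z := by
      rintro e he hcol ⟨x, hxe, hRx⟩ z hz
      obtain ⟨y, rfl⟩ := Sym2.mem_iff_exists.mp hxe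
      have hKxy : K.Adj x y := (hKadj x y).mpr ⟨(H.mem_edgeSet).mp he, hcol⟩
      rcases Sym2.mem_iff.mp hz with rfl | rfl
      · exact hRx
      · exact hRx.trans hKxy.reachable
    -- the recoloring
    have notB : ∀ e ∈ G.edgeSet, e ≠ s(u₀, v₀) → (∃ x, x ∈ e ∧ x ∈ s(u₀, v₀)) →
        (if e ∈ H.edgeSet ∧ (c e = a ∨ c e = b) ∧ (∃ x ∈ e, K.Reachable u₀ x)
          then sw (c e) else c e) ≠ b := by
      rintro e he hne ⟨x, hxe, hxe₀⟩
      have heH : e ∈ H.edgeSet := hHmem he hne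
      rcases Sym2.mem_iff.mp hxe₀ with h | h
      · rw [h] at hxe
        obtain ⟨w, rfl⟩ := Sym2.mem_iff_exists.mp hxe
        have hca : c s(u₀, w) ≠ a := haU' w ((H.mem_edgeSet).mp heH)
        by_cases hsw : s(u₀, w) ∈ H.edgeSet ∧ (c s(u₀, w) = a ∨ c s(u₀, w) = b) ∧
            (∃ z ∈ s(u₀, w), K.Reachable u₀ z)
        · rw [if_pos hsw]
          have hcb : c s(u₀, w) = b := hsw.2.1.resolve_left hca
          rw [hcb, sw_ba]
          exact hab
        · rw [if_neg hsw]
          intro hEq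
          exact hsw ⟨heH, Or.inr hEq, u₀, by simp, SimpleGraph.Reachable.refl u₀⟩
      · rw [h] at hxe
        obtain ⟨w, rfl⟩ := Sym2.mem_iff_exists.mp hxe
        have hcb : c s(v₀, w) ≠ b := hbV' w ((H.mem_edgeSet).mp heH)
        by_cases hsw : s(v₀, w) ∈ H.edgeSet ∧ (c s(v₀, w) = a ∨ c s(v₀, w) = b) ∧
            (∃ z ∈ s(v₀, w), K.Reachable u₀ z)
        · exact absurd (BOTH _ heH hsw.2.1 hsw.2.2 v₀ (by simp)) notR
        · rw [if_neg hsw]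
          exact hcb
    have hproper : IsProperEdgeColoring G k
        (fun e => if e = s(u₀, v₀) then b
          else if e ∈ H.edgeSet ∧ (c e = a ∨ c e = b) ∧ (∃ x ∈ e, K.Reachable u₀ x)
            then sw (c e) else c e) := by
      intro e₁ he₁ e₂ he₂ hne hsh
      obtain ⟨x, hx1, hx2⟩ := hsh
      show (if e₁ = s(u₀, v₀) then b
          else if e₁ ∈ H.edgeSet ∧ (c e₁ = a ∨ c e₁ = b) ∧ (∃ x ∈ e₁, K.Reachable u₀ x)
            then sw (c e₁) else c e₁) ≠
        (if e₂ = s(u₀, v₀) then b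
          else if e₂ ∈ H.edgeSet ∧ (c e₂ = a ∨ c e₂ = b) ∧ (∃ x ∈ e₂, K.Reachable u₀ x)
            then sw (c e₂) else c e₂)
      by_cases h1 : e₁ = s(u₀, v₀) <;> by_cases h2 : e₂ = s(u₀, v₀)
      · exact absurd (h1.trans h2.symm) hne
      · rw [if_pos h1, if_neg h2]
        exact fun hEq => notB e₂ he₂ h2 ⟨x, hx2, h1 ▸ hx1⟩ hEq.symm
      · rw [if_neg h1, if_pos h2]
        exact notB e₁ he₁ h1 ⟨x, hx1, h2 ▸ hx2⟩
      · rw [if_neg h1, if_neg h2]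
        have heH1 : e₁ ∈ H.edgeSet := hHmem he₁ h1
        have heH2 : e₂ ∈ H.edgeSet := hHmem he₂ h2
        have hcc : c e₁ ≠ c e₂ := hc e₁ heH1 e₂ heH2 hne ⟨x, hx1, hx2⟩
        by_cases s1 : e₁ ∈ H.edgeSet ∧ (c e₁ = a ∨ c e₁ = b) ∧ (∃ z ∈ e₁, K.Reachable u₀ z) <;>
          by_cases s2 : e₂ ∈ H.edgeSet ∧ (c e₂ = a ∨ c e₂ = b) ∧ (∃ z ∈ e₂, K.Reachable u₀ z)
        · rw [if_pos s1, if_pos s2]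
          exact fun hEq => hcc (sw_inj hEq)
        · rw [if_pos s1, if_neg s2]
          intro hEq
          apply s2
          have hcol2 : c e₂ = a ∨ c e₂ = b := by
            have h5 := sw_mem _ s1.2.1
            rwa [hEq] at h5
          exact ⟨heH2, hcol2, x, hx2, BOTH e₁ heH1 s1.2.1 s1.2.2 x hx1⟩
        · rw [if_neg s1, if_pos s2]
          intro hEq
          apply s1
          have hcol1 : c e₁ = a ∨ c e₁ = b := by
            have h5 := sw_mem _ s2.2.1
            rwa [← hEq] at h5
          exact ⟨heH1, hcol1, x, hx1, BOTH e₂ heH2 s2.2.1 s2.2.2 x hx2⟩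
        · rw [if_neg s1, if_neg s2]
          exact hcc
    have := chromIndex_le _ hproper
    omega

lemma list_len_le {G : SimpleGraph V} {I : Finset V} (hI : IsIndep G I) :
    ∀ (n : ℕ) (l : List V), l.length ≤ n → l.Chain' G.Adj →
      l.length ≤ 2 * l.countP (fun x => decide (x ∉ I)) + 1 := by
  intro n
  induction n with
  | zero => intro l hl _; omega
  | succ n ih =>
    intro l hl hch
    match l with
    | [] => simp
    | [x] => simp
    | x :: y :: r =>
      have h1 : G.Adj x y := (List.isChain_cons_cons.mp hch).1
      have h2 : List.Chain' G.Adj r := ((List.isChain_cons_cons.mp hch).2).tail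
      have hlen : r.length ≤ n := by
        simp only [List.length_cons] at hl; omega
      have hrec := ih r hlen h2
      have hxy : ¬(x ∈ I ∧ y ∈ I) := by
        rintro ⟨hx, hy⟩
        exact hI (by simpa using hx) (by simpa using hy) h1.ne h1
      simp only [decide_not] at hrec
      simp only [List.countP_cons, List.length_cons, decide_not]
      by_cases hx : x ∈ I <;> by_cases hy : y ∈ I <;>
        simp [hx, hy] at hxy ⊢ <;> omega

lemma walk_filter_bound {G : SimpleGraph V} {I : Finset V} (hI : IsIndep G I)
    {u v : V} (p : G.Walk u v) (hp : p.IsPath) (L : ℕ)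
    (hL : 2 * L + 2 ≤ p.support.length) :
    L + 1 ≤ (p.support.toFinset.filter (fun x => x ∉ I)).card := by
  classical
  have hch := p.isChain_adj_support
  have hnd := hp.support_nodup
  have key := list_len_le hI p.support.length p.support le_rfl hch
  have hsetEq : p.support.toFinset.filter (fun x => x ∉ I)
      = (p.support.filter (fun x => decide (x ∉ I))).toFinset := by
    rw [List.toFinset_filter]
    apply Finset.filter_congr
    intro x _
    simp
  have hcard : (p.support.toFinset.filter (fun x => x ∉ I)).card
      = p.support.countP (fun x => decide (x ∉ I)) := by
    rw [hsetEq, List.toFinset_card_of_nodup (hnd.filter _), List.countP_eq_length_filter]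
  omega



omit [Fintype V] in
lemma indep_filter_empty {G : SimpleGraph V} [DecidableRel G.Adj] {I : Finset V}
    (hI : IsIndep G I) {v : V} (hv : v ∈ I) : I.filter (G.Adj v) = ∅ := by
  rw [Finset.eq_empty_iff_forall_notMem]
  intro x hx
  rw [Finset.mem_filter] at hx
  exact hI (by simpa using hv) (by simpa using hx.1) hx.2.ne hx.2

lemma deg_split (G : SimpleGraph V) [DecidableRel G.Adj] (I : Finset V) (u : V) :
    G.degree u = (I.filter (G.Adj u)).card + (Iᶜ.filter (G.Adj u)).card := by
  have h : G.degree u = (univ.filter (G.Adj u)).card := by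
    rw [← G.card_neighborFinset_eq_degree, neighborFinset_eq_filter]
  rw [h, ← Finset.union_compl I, Finset.filter_union,
    Finset.card_union_of_disjoint (Finset.disjoint_filter_filter disjoint_compl_right)]

lemma double_count (G : SimpleGraph V) [DecidableRel G.Adj] (I : Finset V) :
    ∑ v ∈ I, (Iᶜ.filter (G.Adj v)).card = ∑ u ∈ Iᶜ, (I.filter (G.Adj u)).card := by
  simp only [Finset.card_filter]
  rw [Finset.sum_comm]
  exact Finset.sum_congr rfl fun u _ => Finset.sum_congr rfl fun v _ =>
    if_congr (G.adj_comm v u) rfl rfl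

lemma main_count {G : SimpleGraph V} [DecidableRel G.Adj] {k : ℕ} (hk : 1 ≤ k)
    (hdeg : ∀ v, G.degree v ≤ k) (hmindeg : ∀ v, k - 1 ≤ G.degree v)
    {I : Finset V} (hI : IsIndep G I)
    {x y : V} (hx : x ∉ I) (hy : y ∉ I) (hxy : G.Adj x y) :
    k * I.card + 2 ≤ k * Iᶜ.card + (I.filter (fun v => G.degree v = k - 1)).card := by
  classical
  have h2 : k * I.card ≤ (∑ v ∈ I, G.degree v)
      + (I.filter (fun v => G.degree v = k - 1)).card := by
    rw [Finset.card_filter, ← Finset.sum_add_distrib]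
    have hconst : k * I.card = ∑ _v ∈ I, k := by
      rw [Finset.sum_const, smul_eq_mul, mul_comm]
    rw [hconst]
    refine Finset.sum_le_sum fun v hv => ?_
    have h3 := hdeg v
    have h4 := hmindeg v
    by_cases h5 : G.degree v = k - 1
    · rw [if_pos h5]; omega
    · rw [if_neg h5]; omega
  have hIdeg : ∑ v ∈ I, G.degree v = ∑ v ∈ I, (Iᶜ.filter (G.Adj v)).card := by
    refine Finset.sum_congr rfl fun v hv => ?_
    rw [deg_split G I v, indep_filter_empty hI hv]
    simp
  have hsum2 : ∑ u ∈ Iᶜ, G.degree u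
      = (∑ u ∈ Iᶜ, (I.filter (G.Adj u)).card) + ∑ u ∈ Iᶜ, (Iᶜ.filter (G.Adj u)).card := by
    rw [← Finset.sum_add_distrib]
    exact Finset.sum_congr rfl fun u _ => deg_split G I u
  have h3 : ∑ u ∈ Iᶜ, G.degree u ≤ k * Iᶜ.card := by
    calc ∑ u ∈ Iᶜ, G.degree u ≤ ∑ _u ∈ Iᶜ, k := Finset.sum_le_sum fun u _ => hdeg u
    _ = k * Iᶜ.card := by rw [Finset.sum_const, smul_eq_mul, mul_comm]
  have h5 : 2 ≤ ∑ u ∈ Iᶜ, (Iᶜ.filter (G.Adj u)).card := by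
    have hsub : ({x, y} : Finset V) ⊆ Iᶜ := by
      intro z hz
      rw [Finset.mem_insert, Finset.mem_singleton] at hz
      rcases hz with rfl | rfl
      · exact Finset.mem_compl.mpr hx
      · exact Finset.mem_compl.mpr hy
    have hle := Finset.sum_le_sum_of_subset
      (f := fun u => (Iᶜ.filter (G.Adj u)).card) hsub
    rw [Finset.sum_pair hxy.ne] at hle
    have hle2 : (Iᶜ.filter (G.Adj x)).card + (Iᶜ.filter (G.Adj y)).card
        ≤ ∑ u ∈ Iᶜ, (Iᶜ.filter (G.Adj u)).card := hle
    have hx1 : 1 ≤ (Iᶜ.filter (G.Adj x)).card :=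
      Finset.card_pos.mpr ⟨y, Finset.mem_filter.mpr ⟨Finset.mem_compl.mpr hy, hxy⟩⟩
    have hy1 : 1 ≤ (Iᶜ.filter (G.Adj y)).card :=
      Finset.card_pos.mpr ⟨x, Finset.mem_filter.mpr ⟨Finset.mem_compl.mpr hx, hxy.symm⟩⟩
    omega
  have hdc := double_count G I
  linarith [h2, hIdeg, hsum2, h3, h5, hdc]


end Aux1


/-- if G ∈ C(k,t) then its independence ratio is below
1/2 + 1/(4kφ(k,t)+2). -/
theorem stmt13 {V : Type*} [Fintype V] [DecidableEq V] (G : SimpleGraph V)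
    [DecidableRel G.Adj] (k t : ℕ) (hk : 3 ≤ k) (hG : CKT G k t) :
    (_root_.indepNum G : ℝ) / (Fintype.card V : ℝ) <
      1 / 2 + 1 / (4 * (k : ℝ) * ((t : ℝ) * ((k : ℝ) - 1) ^ 2 + ((k : ℝ) - 1)) + 2) := by
  classical
  obtain ⟨⟨hmax, hchrom, hcrit⟩, hmd, w, P, hP⟩ := hG
  have hk1 : 1 ≤ k := by omega
  have hkR : (3:ℝ) ≤ (k:ℝ) := by exact_mod_cast hk
  have htR : (0:ℝ) ≤ (t:ℝ) := Nat.cast_nonneg t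
  have hden : (0:ℝ) < 4 * (k:ℝ) * ((t:ℝ) * ((k:ℝ) - 1) ^ 2 + ((k:ℝ) - 1)) + 2 := by
    have h1 : (0:ℝ) ≤ (t:ℝ) * ((k:ℝ) - 1) ^ 2 := mul_nonneg htR (sq_nonneg _)
    nlinarith [mul_nonneg (show (0:ℝ) ≤ (k:ℝ) by linarith) h1,
      mul_pos (show (0:ℝ) < (k:ℝ) by linarith) (show (0:ℝ) < (k:ℝ) - 1 by linarith)]
  rcases Nat.eq_zero_or_pos (Fintype.card V) with hn0 | hnpos
  · rw [hn0, Nat.cast_zero, div_zero]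
    have h0 : (0:ℝ) < 1 / (4 * (k:ℝ) * ((t:ℝ) * ((k:ℝ) - 1) ^ 2 + ((k:ℝ) - 1)) + 2) :=
      one_div_pos.mpr hden
    linarith
  -- a maximum independent set
  have hbdd : BddAbove {n | ∃ s : Finset V, IsIndep G s ∧ s.card = n} := by
    refine ⟨Fintype.card V, ?_⟩
    rintro n ⟨s, _, rfl⟩
    exact s.card_le_univ.trans (le_of_eq Finset.card_univ)
  have hmem : _root_.indepNum G ∈ {n | ∃ s : Finset V, IsIndep G s ∧ s.card = n} :=
    Nat.sSup_mem ⟨0, ∅, by simp [IsIndep], by simp⟩ hbdd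
  obtain ⟨I, hI, hIcard⟩ := hmem
  have hdeg : ∀ v, G.degree v ≤ k := fun v => by
    rw [← hmax]; exact G.degree_le_maxDegree v
  have hmindeg : ∀ v, k - 1 ≤ G.degree v := fun v =>
    le_trans hmd (G.minDegree_le_degree v)
  -- main counting inequality
  have ineq1 : k * I.card + 2 ≤ k * Iᶜ.card
      + (I.filter (fun v => G.degree v = k - 1)).card := by
    by_cases hbip : ∃ x y, x ∉ I ∧ y ∉ I ∧ G.Adj x y
    · obtain ⟨x, y, hx, hy, hxy⟩ := hbip
      exact main_count hk1 hdeg hmindeg hI hx hy hxy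
    · push_neg at hbip
      refine absurd (kempe hk1 hdeg hcrit hchrom I ?_) not_false
      intro x y hxy hiff
      by_cases hxI : x ∈ I
      · exact hI (by simpa using hxI) (by simpa using hiff.mp hxI) hxy.ne hxy
      · exact hbip x y hxI (fun h => hxI (hiff.mpr h)) hxy
  -- path system counting
  have hcard1 : ∀ v ∈ I.filter (fun v => G.degree v = k - 1),
      (k - 1) * (t * (k - 1) + 1) ≤ ((univ : Finset (Fin (k-1))).biUnion
        (fun i => (P v i).support.toFinset.filter (fun x => x ∉ I))).card := by
    intro v hv
    rw [Finset.mem_filter] at hv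
    obtain ⟨hvI, hvdeg⟩ := hv
    have hdisj : ∀ i ∈ (univ : Finset (Fin (k-1))), ∀ j ∈ (univ : Finset (Fin (k-1))),
        i ≠ j → Disjoint ((P v i).support.toFinset.filter (fun x => x ∉ I))
          ((P v j).support.toFinset.filter (fun x => x ∉ I)) := by
      intro i _ j _ hij
      rw [Finset.disjoint_left]
      intro x hxi hxj
      rw [Finset.mem_filter, List.mem_toFinset] at hxi hxj
      have hxv : x = v := (hP v hvdeg i).2.2.2.1 j hij x hxi.1 hxj.1
      exact hxi.2 (hxv ▸ hvI)
    rw [Finset.card_biUnion hdisj]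
    calc (k-1) * (t * (k - 1) + 1) = ∑ _i : Fin (k-1), (t * (k - 1) + 1) := by
          rw [Finset.sum_const, Finset.card_univ, Fintype.card_fin, smul_eq_mul]
    _ ≤ _ := by
      refine Finset.sum_le_sum fun i _ => ?_
      refine walk_filter_bound hI (P v i) (hP v hvdeg i).1 (t * (k - 1)) ?_
      have h6 := (hP v hvdeg i).2.2.1
      rw [mul_assoc] at h6
      exact h6
  have hcard2 : (I.filter (fun v => G.degree v = k - 1)).card
        * ((k - 1) * (t * (k - 1) + 1))
      ≤ ((I.filter (fun v => G.degree v = k - 1)).biUnion (fun v =>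
        (univ : Finset (Fin (k-1))).biUnion
          (fun i => (P v i).support.toFinset.filter (fun x => x ∉ I)))).card := by
    have hdisj2 : ∀ v ∈ I.filter (fun v => G.degree v = k - 1),
        ∀ v' ∈ I.filter (fun v => G.degree v = k - 1), v ≠ v' →
        Disjoint ((univ : Finset (Fin (k-1))).biUnion
            (fun i => (P v i).support.toFinset.filter (fun x => x ∉ I)))
          ((univ : Finset (Fin (k-1))).biUnion
            (fun i => (P v' i).support.toFinset.filter (fun x => x ∉ I))) := by
      intro v hv v' hv' hne
      rw [Finset.disjoint_left]
      intro x hxv hxv'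
      simp only [Finset.mem_biUnion, Finset.mem_filter, List.mem_toFinset,
        Finset.mem_univ, true_and] at hxv hxv'
      obtain ⟨i, hxi, hxI⟩ := hxv
      obtain ⟨j, hxj, _⟩ := hxv'
      rw [Finset.mem_filter] at hv hv'
      exact ((hP v hv.2 i).2.2.2.2 v' hv'.2 hne.symm j x hxi) hxj
    rw [Finset.card_biUnion hdisj2]
    calc (I.filter (fun v => G.degree v = k - 1)).card * ((k - 1) * (t * (k - 1) + 1))
        = ∑ _v ∈ I.filter (fun v => G.degree v = k - 1), (k - 1) * (t * (k - 1) + 1) := by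
          rw [Finset.sum_const, smul_eq_mul]
    _ ≤ _ := Finset.sum_le_sum hcard1
  have hBsub : ((I.filter (fun v => G.degree v = k - 1)).biUnion (fun v =>
      (univ : Finset (Fin (k-1))).biUnion
        (fun i => (P v i).support.toFinset.filter (fun x => x ∉ I)))) ⊆ Iᶜ := by
    intro x hx
    simp only [Finset.mem_biUnion, Finset.mem_filter, List.mem_toFinset,
      Finset.mem_univ, true_and] at hx
    obtain ⟨v, hv, i, hsupp, hxI⟩ := hx
    exact Finset.mem_compl.mpr hxI
  have ineq2 : (I.filter (fun v => G.degree v = k - 1)).card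
      * ((k - 1) * (t * (k - 1) + 1)) ≤ Iᶜ.card :=
    le_trans hcard2 (Finset.card_le_card hBsub)
  -- final arithmetic
  have hAC : I.card + Iᶜ.card = Fintype.card V := Finset.card_add_card_compl I
  have hΦ2 : 2 ≤ (k - 1) * (t * (k - 1) + 1) := by
    have h7 : 2 * 1 ≤ (k - 1) * (t * (k - 1) + 1) :=
      Nat.mul_le_mul (by omega) (by omega)
    omega
  have c1 : (k:ℝ) * (I.card:ℝ) + 2 ≤ (k:ℝ) * (Iᶜ.card:ℝ)
      + ((I.filter (fun v => G.degree v = k - 1)).card : ℝ) := by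
    exact_mod_cast ineq1
  have c2 : ((I.filter (fun v => G.degree v = k - 1)).card : ℝ)
      * (((k - 1) * (t * (k - 1) + 1) : ℕ) : ℝ) ≤ (Iᶜ.card : ℝ) := by
    exact_mod_cast ineq2
  have cΦ : (2:ℝ) ≤ (((k - 1) * (t * (k - 1) + 1) : ℕ) : ℝ) := by exact_mod_cast hΦ2
  have hΦcast : (t:ℝ) * ((k:ℝ) - 1) ^ 2 + ((k:ℝ) - 1)
      = (((k - 1) * (t * (k - 1) + 1) : ℕ) : ℝ) := by
    push_cast [Nat.cast_sub (show 1 ≤ k by omega)]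
    ring
  have hn : (0:ℝ) < (Fintype.card V : ℝ) := by exact_mod_cast hnpos
  have hd2 : (0:ℝ) < 2 * (k:ℝ) * (((k - 1) * (t * (k - 1) + 1) : ℕ) : ℝ) + 1 := by
    nlinarith
  have key : (I.card:ℝ) * (2 * (k:ℝ) * (((k - 1) * (t * (k - 1) + 1) : ℕ) : ℝ) + 1)
      < (Fintype.card V : ℝ)
        * ((k:ℝ) * (((k - 1) * (t * (k - 1) + 1) : ℕ) : ℝ) + 1) := by
    have hACr : (Fintype.card V : ℝ) = (I.card:ℝ) + (Iᶜ.card:ℝ) := by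
      exact_mod_cast hAC.symm
    rw [hACr]
    nlinarith [mul_le_mul_of_nonneg_right c1
      (le_trans (by norm_num : (0:ℝ) ≤ 2) cΦ), c2, cΦ, hkR,
      (show (0:ℝ) ≤ (I.card:ℝ) from Nat.cast_nonneg _),
      (show (0:ℝ) ≤ (Iᶜ.card:ℝ) from Nat.cast_nonneg _)]
  have hfinal : (I.card:ℝ) / (Fintype.card V : ℝ)
      < ((k:ℝ) * (((k - 1) * (t * (k - 1) + 1) : ℕ) : ℝ) + 1)
        / (2 * (k:ℝ) * (((k - 1) * (t * (k - 1) + 1) : ℕ) : ℝ) + 1) := by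
    rw [div_lt_div_iff₀ hn hd2]
    nlinarith [key]
  have hgen : ∀ X : ℝ, 0 < X → (X + 1) / (2 * X + 1) = 1 / 2 + 1 / (4 * X + 2) := by
    intro X hX
    have h1 : (2 * X + 1) ≠ 0 := by positivity
    have h2 : (4 * X + 2) ≠ 0 := by positivity
    field_simp
    ring
  have h0 : (0:ℝ) < (k:ℝ) * (((k - 1) * (t * (k - 1) + 1) : ℕ) : ℝ) :=
    mul_pos (by linarith) (by linarith)
  have hEq2 := hgen _ h0
  rw [← hIcard, hΦcast]
  rw [show (4 * (k:ℝ) * (((k - 1) * (t * (k - 1) + 1) : ℕ) : ℝ) + 2)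
      = 4 * ((k:ℝ) * (((k - 1) * (t * (k - 1) + 1) : ℕ) : ℝ)) + 2 by ring]
  rw [← hEq2]
  rw [show (2 * ((k:ℝ) * (((k - 1) * (t * (k - 1) + 1) : ℕ) : ℝ)) + 1)
      = 2 * (k:ℝ) * (((k - 1) * (t * (k - 1) + 1) : ℕ) : ℝ) + 1 by ring]
  exact hfinal
end
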